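/- arXiv:1902.02465 — 7 statements merged into one kernel-verified Lean document; each statement's English description precedes it below -/
import Mathlib

section
/- Let G be a finite group acting on finite sets X and Y, and χ: G → F* a multiplicative character. Call a pair (x,y) ∈ X×Y transverse if the intersection of stabilizers G_x ∩ G_y is contained in ker χ. Then the dimension of Hom_G(F[Y], F[X]⊗χ) equals the number of G-orbits on the set X⋔Y of transverse pairs (under the diagonal G-action). -/
/-- The space `Hom_G(F[Y], F[X] ⊗ χ)` of linear maps intertwining the permutation
representation on `F[Y]` with the `χ`-twisted permutation representation on `F[X]`. -/
def twistedIntertwiners (G X Y F : Type*) [Group G] [Fintype X] [Fintype Y]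
    [MulAction G X] [MulAction G Y] [Field F] (χ : G →* Fˣ) :
    Submodule F ((Y → F) →ₗ[F] (X → F)) where
  carrier := {T | ∀ (g : G) (f : Y → F) (x : X),
    T (fun y => f (g⁻¹ • y)) x = (χ g : F) * T f (g⁻¹ • x)}
  add_mem' := by
    intro a b ha hb g f x
    simp only [LinearMap.add_apply, Pi.add_apply, ha g f x, hb g f x]
    ring
  zero_mem' := by intro g f x; simp
  smul_mem' := by
    intro c T hT g f x
    simp only [LinearMap.smul_apply, Pi.smul_apply, smul_eq_mul, hT g f x]
    ring

/-- A pair `(x, y)` is transverse with respect to `χ` if the intersection of the stabilizers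
of `x` and `y` is contained in the kernel of `χ`. -/
def IsTransverse {G X Y F : Type*} [Group G] [MulAction G X] [MulAction G Y] [Field F]
    (χ : G →* Fˣ) (x : X) (y : Y) : Prop :=
  MulAction.stabilizer G x ⊓ MulAction.stabilizer G y ≤ χ.ker

section Aux

variable {G X Y F : Type*} [Group G] [Fintype X] [Fintype Y]
    [MulAction G X] [MulAction G Y] [Field F] (χ : G →* Fˣ)

/-- transversality is invariant under the diagonal action. -/
lemma isTransverse_smul {p : X × Y} (g : G) (h : IsTransverse χ p.1 p.2) :
    IsTransverse χ (g • p).1 (g • p).2 := by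
  intro k hk
  obtain ⟨hk1, hk2⟩ := Subgroup.mem_inf.mp hk
  have hk1' : k • (g • p.1) = g • p.1 := MulAction.mem_stabilizer_iff.mp hk1
  have hk2' : k • (g • p.2) = g • p.2 := MulAction.mem_stabilizer_iff.mp hk2
  have h1 : g⁻¹ * k * g ∈ MulAction.stabilizer G p.1 ⊓ MulAction.stabilizer G p.2 := by
    rw [Subgroup.mem_inf]
    constructor
    · rw [MulAction.mem_stabilizer_iff, mul_smul, mul_smul, hk1', inv_smul_smul]
    · rw [MulAction.mem_stabilizer_iff, mul_smul, mul_smul, hk2', inv_smul_smul]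
  have h2 : χ (g⁻¹ * k * g) = 1 := h h1
  rw [MonoidHom.mem_ker]
  have hk' : k = g * (g⁻¹ * k * g) * g⁻¹ := by group
  rw [hk', map_mul, map_mul, h2, map_inv, mul_one, mul_inv_cancel]

lemma isTransverse_of_orbitRel {p q : X × Y}
    (hpq : MulAction.orbitRel G (X × Y) p q) (h : IsTransverse χ q.1 q.2) :
    IsTransverse χ p.1 p.2 := by
  obtain ⟨g, rfl⟩ := MulAction.mem_orbit_iff.mp (MulAction.orbitRel_apply.mp hpq)
  exact isTransverse_smul χ g h

variable (G X Y) in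
/-- The set of transverse orbits. -/
abbrev TOrb : Type _ := {ω : Quotient (MulAction.orbitRel G (X × Y)) //
    ∃ p : X × Y, IsTransverse χ p.1 p.2 ∧ Quotient.mk _ p = ω}

lemma tg_ex (p : X × Y) :
    ∃ g : G, g • (Quotient.mk (MulAction.orbitRel G (X × Y)) p).out = p := by
  have h := Quotient.mk_out (s := MulAction.orbitRel G (X × Y)) p
  exact MulAction.mem_orbit_iff.mp (MulAction.mem_orbit_symm.mp (MulAction.orbitRel_apply.mp h))

variable (G) in
/-- A chosen group element carrying the chosen orbit representative of `p` to `p`. -/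
noncomputable def tg (p : X × Y) : G := (tg_ex (G := G) p).choose

variable (G) in
lemma tg_spec (p : X × Y) :
    tg G p • (Quotient.mk (MulAction.orbitRel G (X × Y)) p).out = p :=
  (tg_ex (G := G) p).choose_spec

open Classical in
/-- The matrix associated to a function on transverse orbits. -/
noncomputable def mat (c : TOrb G X Y χ → F) (p : X × Y) : F :=
  if h : IsTransverse χ p.1 p.2 then
    (χ (tg G p) : F) * c ⟨Quotient.mk _ p, p, h, rfl⟩
  else 0

lemma out_transverse {p : X × Y} (h : IsTransverse χ p.1 p.2) :
    IsTransverse χ (Quotient.mk (MulAction.orbitRel G (X × Y)) p).out.1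
      (Quotient.mk (MulAction.orbitRel G (X × Y)) p).out.2 := by
  exact isTransverse_of_orbitRel χ (Quotient.mk_out (s := MulAction.orbitRel G (X × Y)) p) h

lemma mat_smul (c : TOrb G X Y χ → F) (g : G) (p : X × Y) :
    mat χ c (g • p) = (χ g : F) * mat χ c p := by
  by_cases h : IsTransverse χ p.1 p.2
  · have h' : IsTransverse χ (g • p).1 (g • p).2 := isTransverse_smul χ g h
    have horb : Quotient.mk (MulAction.orbitRel G (X × Y)) (g • p)
        = Quotient.mk (MulAction.orbitRel G (X × Y)) p := by
      exact Quotient.sound (MulAction.orbitRel_apply.mpr (MulAction.mem_orbit p g))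
    rw [mat, mat, dif_pos h', dif_pos h]
    have hc : c ⟨Quotient.mk _ (g • p), g • p, h', rfl⟩ = c ⟨Quotient.mk _ p, p, h, rfl⟩ := by
      congr 1
      exact Subtype.ext horb
    rw [hc]
    have hst : (tg G (g • p))⁻¹ * (g * tg G p)
        ∈ MulAction.stabilizer G ((Quotient.mk (MulAction.orbitRel G (X × Y)) p).out) := by
      rw [MulAction.mem_stabilizer_iff, mul_smul, mul_smul, tg_spec, inv_smul_eq_iff]
      conv_rhs => rw [← horb]
      exact (tg_spec G (g • p)).symm
    have hker : (tg G (g • p))⁻¹ * (g * tg G p) ∈ χ.ker := by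
      set q := (Quotient.mk (MulAction.orbitRel G (X × Y)) p).out with hq
      have hqT : IsTransverse χ q.1 q.2 := out_transverse χ h
      have h2 : ((tg G (g • p))⁻¹ * (g * tg G p)) • q = q := hst
      refine hqT (Subgroup.mem_inf.mpr ⟨?_, ?_⟩)
      · exact MulAction.mem_stabilizer_iff.mpr (congrArg Prod.fst h2)
      · exact MulAction.mem_stabilizer_iff.mpr (congrArg Prod.snd h2)
    rw [MonoidHom.mem_ker] at hker
    have hval : χ (tg G (g • p)) = χ g * χ (tg G p) := by
      have : χ ((tg G (g • p))⁻¹) * (χ g * χ (tg G p)) = 1 := by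
        rw [← map_mul, ← map_mul]; exact hker
      calc χ (tg G (g • p))
          = χ (tg G (g • p)) * (χ ((tg G (g • p))⁻¹)
            * (χ g * χ (tg G p))) := by rw [this]; group
        _ = χ g * χ (tg G p) := by rw [map_inv]; group
    rw [hval]
    push_cast
    ring
  · have h' : ¬ IsTransverse χ (g • p).1 (g • p).2 := by
      intro h'
      exact h (by simpa using isTransverse_smul χ g⁻¹ h')
    rw [mat, mat, dif_neg h', dif_neg h, mul_zero]

/-- The linear map `(Y → F) →ₗ (X → F)` with matrix `mat c`. -/
noncomputable def psiAux (c : TOrb G X Y χ → F) : (Y → F) →ₗ[F] (X → F) where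
  toFun f x := ∑ y, f y * mat χ c (x, y)
  map_add' f g := by funext x; simp [add_mul, Finset.sum_add_distrib]
  map_smul' r f := by
    funext x
    simp only [Pi.smul_apply, smul_eq_mul, RingHom.id_apply, Finset.mul_sum, mul_assoc]

lemma psiAux_mem (c : TOrb G X Y χ → F) : psiAux χ c ∈ twistedIntertwiners G X Y F χ := by
  intro g f x
  show ∑ y, f (g⁻¹ • y) * mat χ c (x, y) = (χ g : F) * ∑ y, f y * mat χ c (g⁻¹ • x, y)
  rw [Finset.mul_sum,
    ← Equiv.sum_comp (MulAction.toPerm g : Equiv.Perm Y)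
      (fun y => f (g⁻¹ • y) * mat χ c (x, y))]
  refine Finset.sum_congr rfl ?_
  intro y _
  have he : (MulAction.toPerm g : Equiv.Perm Y) y = g • y := rfl
  simp only [Function.comp, he, inv_smul_smul]
  have hm : mat χ c (x, g • y) = (χ g : F) * mat χ c (g⁻¹ • x, y) := by
    have hp : (x, g • y) = g • ((g⁻¹ • x, y) : X × Y) := by
      rw [Prod.smul_mk, smul_inv_smul]
    rw [hp, mat_smul]
  rw [hm]; ring

/-- `Ψ : (TOrb → F) → twistedIntertwiners`. -/
noncomputable def Psi : (TOrb G X Y χ → F) →ₗ[F] twistedIntertwiners G X Y F χ where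
  toFun c := ⟨psiAux χ c, psiAux_mem χ c⟩
  map_add' c c' := by
    apply Subtype.ext
    apply LinearMap.ext
    intro f
    funext x
    show ∑ y, f y * mat χ (c + c') (x, y) = _
    have : ∀ p : X × Y, mat χ (c + c') p = mat χ c p + mat χ c' p := by
      intro p
      by_cases h : IsTransverse χ p.1 p.2 <;> simp [mat, h, mul_add]
    simp only [this, mul_add, Finset.sum_add_distrib]
    rfl
  map_smul' r c := by
    apply Subtype.ext
    apply LinearMap.ext
    intro f
    funext x
    show ∑ y, f y * mat χ (r • c) (x, y) = _
    have : ∀ p : X × Y, mat χ (r • c) p = r * mat χ c p := by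
      intro p
      by_cases h : IsTransverse χ p.1 p.2 <;> simp [mat, h] <;> ring
    simp only [this]
    show _ = r * ∑ y, f y * mat χ c (x, y)
    rw [Finset.mul_sum]
    congr 1; funext y; ring

variable [DecidableEq Y]

/-- `Φ : twistedIntertwiners → (TOrb → F)`, evaluation at the chosen representative. -/
noncomputable def Phi : twistedIntertwiners G X Y F χ →ₗ[F] (TOrb G X Y χ → F) where
  toFun T ω := T.1 (Pi.single ω.1.out.2 1) ω.1.out.1
  map_add' T T' := by funext ω; simp
  map_smul' r T := by funext ω; simp

/-- The basic matrix equivariance for an intertwiner. -/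
lemma Tmat_smul (T : (Y → F) →ₗ[F] (X → F)) (hT : T ∈ twistedIntertwiners G X Y F χ)
    (g : G) (p : X × Y) :
    T (Pi.single (g • p).2 1) (g • p).1 = (χ g : F) * T (Pi.single p.2 1) p.1 := by
  classical
  have h := hT g (Pi.single p.2 1) (g • p.1)
  have hf : (fun y => (Pi.single p.2 1 : Y → F) (g⁻¹ • y)) = (Pi.single (g • p.2) 1 : Y → F) := by
    funext y
    simp only [Pi.single_apply, inv_smul_eq_iff]
  rw [hf] at h
  simpa using h

lemma Tmat_eq_zero (T : (Y → F) →ₗ[F] (X → F)) (hT : T ∈ twistedIntertwiners G X Y F χ)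
    (p : X × Y) (h : ¬ IsTransverse χ p.1 p.2) :
    T (Pi.single p.2 1) p.1 = 0 := by
  rw [IsTransverse, SetLike.le_def] at h
  push_neg at h
  obtain ⟨k, hk, hknot⟩ := h
  have hfix : k • p = p := by
    have h1 := hk.1.out
    have h2 := hk.2.out
    ext
    · exact h1
    · exact h2
  have heq := Tmat_smul χ T hT k p
  rw [hfix] at heq
  have hne : (χ k : F) ≠ 1 := by
    intro hc
    exact hknot (by rw [MonoidHom.mem_ker]; exact Units.ext (by simpa using hc))
  have hz : (1 - (χ k : F)) * T (Pi.single p.2 1) p.1 = 0 := by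
    linear_combination heq
  rcases mul_eq_zero.mp hz with h0 | h0
  · exact absurd (sub_eq_zero.mp h0).symm hne
  · exact h0

lemma T_expand (T : (Y → F) →ₗ[F] (X → F)) (f : Y → F) (x : X) :
    T f x = ∑ y, f y * T (Pi.single y 1) x := by
  classical
  conv_lhs => rw [← Finset.univ_sum_single f]
  rw [map_sum]
  rw [Finset.sum_apply]
  congr 1
  funext y
  have h1 : (Pi.single y (f y) : Y → F) = f y • (Pi.single y 1 : Y → F) := by
    rw [← Pi.single_smul]; simp
  rw [h1, map_smul]
  simp

lemma Phi_Psi (c : TOrb G X Y χ → F) : Phi χ (Psi χ c) = c := by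
  funext ω
  obtain ⟨p, hp, hpω⟩ := ω.2
  show (psiAux χ c) (Pi.single ω.1.out.2 1) ω.1.out.1 = c ω
  classical
  show ∑ y, (Pi.single ω.1.out.2 1 : Y → F) y * mat χ c (ω.1.out.1, y) = c ω
  rw [Finset.sum_eq_single ω.1.out.2]
  · simp only [Pi.single_eq_same, one_mul]
    have hout : IsTransverse χ ω.1.out.1 ω.1.out.2 := by
      rw [← hpω]
      exact out_transverse χ hp
    have : ((ω.1.out.1, ω.1.out.2) : X × Y) = ω.1.out := rfl
    rw [this, mat, dif_pos (by simpa using hout)]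
    have hmk : Quotient.mk (MulAction.orbitRel G (X × Y)) ω.1.out = ω.1 :=
      Quotient.out_eq _
    have hc : c ⟨Quotient.mk _ ω.1.out, ω.1.out, by simpa using hout, rfl⟩ = c ω := by
      congr 1
      exact Subtype.ext hmk
    rw [hc]
    have hstab : tg G ω.1.out ∈ MulAction.stabilizer G ω.1.out := by
      rw [MulAction.mem_stabilizer_iff]
      have := tg_spec G ω.1.out
      rwa [hmk] at this
    have : χ (tg G ω.1.out) = 1 := by
      have h1 : IsTransverse χ ω.1.out.1 ω.1.out.2 := hout
      refine h1 (Subgroup.mem_inf.mpr ⟨?_, ?_⟩)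
      · exact MulAction.mem_stabilizer_iff.mpr
          (congrArg Prod.fst (MulAction.mem_stabilizer_iff.mp hstab))
      · exact MulAction.mem_stabilizer_iff.mpr
          (congrArg Prod.snd (MulAction.mem_stabilizer_iff.mp hstab))
    rw [this]
    simp
  · intro y _ hy
    simp [Pi.single_apply, hy]
  · intro h
    exact absurd (Finset.mem_univ _) h

lemma Psi_Phi (T : twistedIntertwiners G X Y F χ) : Psi χ (Phi χ T) = T := by
  apply Subtype.ext
  apply LinearMap.ext
  intro f
  funext x
  show ∑ y, f y * mat χ (Phi χ T) (x, y) = T.1 f x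
  rw [T_expand T.1 f x]
  congr 1
  funext y
  congr 1
  -- mat χ (Phi χ T) (x, y) = T.1 (Pi.single y 1) x
  by_cases h : IsTransverse χ (x, y).1 (x, y).2
  · rw [mat, dif_pos h]
    show (χ (tg G (x, y)) : F)
        * T.1 (Pi.single (Quotient.mk (MulAction.orbitRel G (X × Y)) (x, y)).out.2 1)
          (Quotient.mk (MulAction.orbitRel G (X × Y)) (x, y)).out.1 = _
    have := Tmat_smul χ T.1 T.2 (tg G (x, y))
      ((Quotient.mk (MulAction.orbitRel G (X × Y)) (x, y)).out)
    rw [tg_spec] at this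
    rw [← this]
  · rw [mat, dif_neg h]
    exact (Tmat_eq_zero χ T.1 T.2 (x, y) h).symm

end Aux

/-- the dimension of `Hom_G(F[Y], F[X] ⊗ χ)` equals the number of `G`-orbits
on the set of transverse pairs in `X × Y` (equivalently, the number of orbits of `X × Y`
consisting of transverse pairs, since transversality is a `G`-invariant condition). -/
theorem stmt_2 {G X Y F : Type*} [Group G] [Fintype G] [Fintype X] [Fintype Y]
    [MulAction G X] [MulAction G Y] [Field F] (χ : G →* Fˣ) :
    Module.finrank F (twistedIntertwiners G X Y F χ) =
      Nat.card {ω : Quotient (MulAction.orbitRel G (X × Y)) //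
        ∃ p : X × Y, IsTransverse χ p.1 p.2 ∧ Quotient.mk _ p = ω} := by
  classical
  have e : (TOrb G X Y χ → F) ≃ₗ[F] twistedIntertwiners G X Y F χ :=
    LinearEquiv.ofLinear (Psi χ) (Phi χ)
      (by apply LinearMap.ext; intro T; exact Psi_Phi χ T)
      (by apply LinearMap.ext; intro c; exact Phi_Psi χ c)
  haveI : Finite (TOrb G X Y χ) := by
    haveI : Finite (Quotient (MulAction.orbitRel G (X × Y))) := Quotient.finite _
    infer_instance
  haveI : Fintype (TOrb G X Y χ) := Fintype.ofFinite _
  rw [← e.finrank_eq, Module.finrank_pi, Nat.card_eq_fintype_card]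
end

section
/- Fix positive integers n and d with n² < d, and a field F of characteristic ≠ 2. Then Hom_{S_d}((F^n)^{⊗d}, (F^n)^{⊗d} ⊗ sgn) = 0; equivalently, End_{A_d}((F^n)^{⊗d}) = End_{S_d}((F^n)^{⊗d}). -/
section Aux

variable {n d : ℕ} {F : Type*} [Field F]

private lemma exists_fix (hd : n ^ 2 < d) (u v : Fin d → Fin n) :
    ∃ i j : Fin d, i ≠ j ∧ u i = u j ∧ v i = v j := by
  have hcard : Fintype.card (Fin n × Fin n) < Fintype.card (Fin d) := by
    simpa [Fintype.card_prod, ← sq] using hd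
  obtain ⟨i, j, hij, h⟩ :=
    Fintype.exists_ne_map_eq_of_card_lt (fun i : Fin d => (u i, v i)) hcard
  exact ⟨i, j, hij, congrArg Prod.fst h, congrArg Prod.snd h⟩

private lemma comp_swap {α β : Type*} [DecidableEq α] (u : α → β) {i j : α}
    (h : u i = u j) : u ∘ ⇑(Equiv.swap i j) = u := by
  funext k
  simp only [Function.comp_apply, Equiv.swap_apply_def]
  split_ifs with h1 h2 <;> simp_all

private lemma single_comp (v : Fin d → Fin n) (σ : Equiv.Perm (Fin d)) :
    (fun x : Fin d → Fin n => (Pi.single v 1 : (Fin d → Fin n) → F) (x ∘ ⇑σ)) =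
      (Pi.single (v ∘ ⇑σ⁻¹) 1 : (Fin d → Fin n) → F) := by
  funext x
  simp only [Pi.single_apply]
  by_cases hx : x = v ∘ ⇑σ⁻¹
  · subst hx
    rw [if_pos, if_pos rfl]
    funext k; simp
  · rw [if_neg hx, if_neg]
    intro hc
    apply hx
    funext k
    have := congrFun hc (σ⁻¹ k)
    simpa using this

end Aux

/-- if `n² < d` and `char F ≠ 2`, then
`Hom_{S_d}((Fⁿ)^{⊗d}, (Fⁿ)^{⊗d} ⊗ sgn) = 0`; equivalently, every `A_d`-equivariant
endomorphism of `(Fⁿ)^{⊗d}` is already `S_d`-equivariant. Here `(Fⁿ)^{⊗d}` is realized as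
the permutation representation `F[I(n,d)]` on functions on `I(n,d) = (Fin d → Fin n)`,
with `w ∈ S_d` acting by `f ↦ f(· ∘ w)`. -/
theorem stmt_6 (n d : ℕ) (hn : 0 < n) (hd : n ^ 2 < d) (F : Type*) [Field F]
    (h2 : (2 : F) ≠ 0) :
    (∀ T : ((Fin d → Fin n) → F) →ₗ[F] ((Fin d → Fin n) → F),
      (∀ (w : Equiv.Perm (Fin d)) (f : (Fin d → Fin n) → F),
        T (fun v => f (v ∘ w)) =
          fun v => ((Equiv.Perm.sign w : ℤ) : F) * T f (v ∘ w)) →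
      T = 0) ∧
    (∀ T : ((Fin d → Fin n) → F) →ₗ[F] ((Fin d → Fin n) → F),
      (∀ w ∈ alternatingGroup (Fin d), ∀ f : (Fin d → Fin n) → F,
        T (fun v => f (v ∘ w)) = fun v => T f (v ∘ w)) ↔
      (∀ (w : Equiv.Perm (Fin d)) (f : (Fin d → Fin n) → F),
        T (fun v => f (v ∘ w)) = fun v => T f (v ∘ w))) := by
  constructor
  · -- Part 1
    intro T hT
    apply Module.Basis.ext (Pi.basisFun F (Fin d → Fin n))
    intro v
    rw [Pi.basisFun_apply, LinearMap.zero_apply]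
    funext u
    obtain ⟨i, j, hij, hu, hv⟩ := exists_fix hd u v
    set τ : Equiv.Perm (Fin d) := Equiv.swap i j with hτ
    have key := hT τ (Pi.single v 1)
    rw [single_comp] at key
    have hvτ : v ∘ ⇑τ⁻¹ = v := by rw [Equiv.swap_inv]; exact comp_swap v hv
    rw [hvτ] at key
    have huτ : u ∘ ⇑τ = u := comp_swap u hu
    have key2 := congrFun key u
    rw [huτ, Equiv.Perm.sign_swap hij] at key2
    have h2a : (2 : F) * T (Pi.single v 1) u = 0 := by
      push_cast at key2
      linear_combination key2
    rcases mul_eq_zero.mp h2a with h | h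
    · exact absurd h h2
    · exact h
  · -- Part 2
    intro T
    constructor
    · intro h w f
      -- reduce to linear map equality, then to basis vectors
      have main : (T ∘ₗ LinearMap.funLeft F F (fun x : Fin d → Fin n => x ∘ ⇑w)) =
          (LinearMap.funLeft F F (fun x : Fin d → Fin n => x ∘ ⇑w) ∘ₗ T) := by
        apply Module.Basis.ext (Pi.basisFun F (Fin d → Fin n))
        intro v
        rw [Pi.basisFun_apply]
        simp only [LinearMap.comp_apply]
        have hL : (LinearMap.funLeft F F (fun x : Fin d → Fin n => x ∘ ⇑w))
            (Pi.single v 1 : (Fin d → Fin n) → F) =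
            (Pi.single (v ∘ ⇑w⁻¹) 1 : (Fin d → Fin n) → F) := single_comp v w
        rw [hL]
        funext u
        show T (Pi.single (v ∘ ⇑w⁻¹) 1) u = T (Pi.single v 1) (u ∘ ⇑w)
        by_cases hw : w ∈ alternatingGroup (Fin d)
        · have := h w hw (Pi.single v 1)
          rw [single_comp] at this
          exact congrFun this u
        · obtain ⟨i, j, hij, hu, hv⟩ := exists_fix hd (u ∘ ⇑w) v
          set τ : Equiv.Perm (Fin d) := Equiv.swap i j with hτ
          have hwsign : Equiv.Perm.sign w = -1 := by
            rcases Int.units_eq_one_or (Equiv.Perm.sign w) with hs | hs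
            · exact absurd (Equiv.Perm.mem_alternatingGroup.mpr hs) hw
            · exact hs
          have hw' : w * τ ∈ alternatingGroup (Fin d) := by
            rw [Equiv.Perm.mem_alternatingGroup, map_mul, hwsign,
              Equiv.Perm.sign_swap hij]
            decide
          have key := h (w * τ) hw' (Pi.single v 1)
          rw [single_comp] at key
          have hinv : v ∘ ⇑(w * τ)⁻¹ = v ∘ ⇑w⁻¹ := by
            rw [mul_inv_rev, Equiv.swap_inv]
            funext k
            simp only [Function.comp_apply, Equiv.Perm.coe_mul]
            exact congrFun (comp_swap v hv) (w⁻¹ k)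
          rw [hinv] at key
          have key2 := congrFun key u
          have huw : u ∘ ⇑(w * τ) = u ∘ ⇑w := by
            funext k
            simp only [Function.comp_apply, Equiv.Perm.coe_mul]
            exact congrFun (comp_swap (u ∘ ⇑w) hu) k
          rw [huw] at key2
          exact key2
      exact LinearMap.congr_fun main f
    · intro h w _ f
      exact h w f
end

section
/- A pair (S,T) of configurations in B(n,d) (ordered set partitions of {1,...,d} into n labelled blocks) has the property that the simultaneous stabilizer of S and T in S_d is contained in A_d if and only if |S_j ∩ T_i| ≤ 1 for all i,j ∈ {1,...,n}; moreover in that case the simultaneous stabilizer is trivial. -/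
/-- A configuration of `d` labelled balls in `n` labelled boxes. -/
def IsConfig {n d : ℕ} (S : Fin n → Finset (Fin d)) : Prop :=
  (∀ i j, i ≠ j → Disjoint (S i) (S j)) ∧ ∀ s : Fin d, ∃ i, s ∈ S i

/-- The permutation `w` fixes the configuration `S` (it permutes the balls within each box). -/
def FixesConfig {n d : ℕ} (w : Equiv.Perm (Fin d)) (S : Fin n → Finset (Fin d)) : Prop :=
  ∀ b, (S b).image ⇑w = S b

lemma swap_fixes {n d : ℕ} (S : Fin n → Finset (Fin d)) (hS : IsConfig S)
    {a b : Fin d} {j : Fin n} (ha : a ∈ S j) (hb : b ∈ S j) :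
    FixesConfig (Equiv.swap a b) S := by
  intro k
  apply Finset.eq_of_subset_of_card_le
  · intro y hy
    simp only [Finset.mem_image] at hy
    obtain ⟨x, hx, rfl⟩ := hy
    have hkj : ∀ c : Fin d, c ∈ S j → c ∈ S k → k = j := by
      intro c hcj hck
      by_contra h
      exact (Finset.disjoint_left.mp (hS.1 k j h) hck) hcj
    rcases eq_or_ne x a with rfl | hxa
    · have := hkj x ha hx; subst this
      simpa [Equiv.swap_apply_left] using hb
    rcases eq_or_ne x b with rfl | hxb
    · have := hkj x hb hx; subst this
      simpa [Equiv.swap_apply_right] using ha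
    · rwa [Equiv.swap_apply_of_ne_of_ne hxa hxb]
  · rw [Finset.card_image_of_injective _ (Equiv.injective _)]

/-- for configurations `S, T ∈ B(n,d)`, the simultaneous stabilizer of `(S,T)`
in `S_d` is contained in the alternating group `A_d` if and only if `|S_j ∩ T_i| ≤ 1` for all
`i, j`; moreover in that case the simultaneous stabilizer is trivial. -/
theorem stmt_7 {n d : ℕ} (S T : Fin n → Finset (Fin d))
    (hS : IsConfig S) (hT : IsConfig T) :
    ((∀ w : Equiv.Perm (Fin d), FixesConfig w S → FixesConfig w T →
        w ∈ alternatingGroup (Fin d)) ↔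
      ∀ i j : Fin n, (S j ∩ T i).card ≤ 1) ∧
    ((∀ i j : Fin n, (S j ∩ T i).card ≤ 1) →
      ∀ w : Equiv.Perm (Fin d), FixesConfig w S → FixesConfig w T → w = 1) := by
  have key : (∀ i j : Fin n, (S j ∩ T i).card ≤ 1) →
      ∀ w : Equiv.Perm (Fin d), FixesConfig w S → FixesConfig w T → w = 1 := by
    intro hcard w hwS hwT
    apply Equiv.ext; intro x
    obtain ⟨j, hj⟩ := hS.2 x
    obtain ⟨i, hi⟩ := hT.2 x
    have hwx : w x ∈ S j := by
      rw [← hwS j]; exact Finset.mem_image_of_mem _ hj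
    have hwx' : w x ∈ T i := by
      rw [← hwT i]; exact Finset.mem_image_of_mem _ hi
    have := Finset.card_le_one.mp (hcard i j) (w x)
      (Finset.mem_inter.mpr ⟨hwx, hwx'⟩) x (Finset.mem_inter.mpr ⟨hj, hi⟩)
    simpa using this
  refine ⟨⟨fun h i j => ?_, fun hcard w hwS hwT => ?_⟩, key⟩
  · by_contra hc
    push_neg at hc
    obtain ⟨a, haS, b, hbS, hab⟩ := Finset.one_lt_card.mp hc
    simp only [Finset.mem_inter] at haS hbS
    have hmem := h (Equiv.swap a b) (swap_fixes S hS haS.1 hbS.1)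
      (swap_fixes T hT haS.2 hbS.2)
    rw [Equiv.Perm.mem_alternatingGroup, Equiv.Perm.sign_swap hab] at hmem
    exact absurd hmem (by decide)
  · rw [key hcard w hwS hwT]
    exact Subgroup.one_mem _
end

section
/- For a field F of characteristic ≠ 2, the dimension of S_F^-(n,d) = Hom_{S_d}((F^n)^{⊗d}, (F^n)^{⊗d}⊗sgn) equals the number of simple bipartite graphs with vertex set [n'] ⊔ [n] and exactly d edges, i.e., binom(n², d). -/
/-- `S_F⁻(n,d) = Hom_{S_d}((Fⁿ)^{⊗d}, (Fⁿ)^{⊗d} ⊗ sgn)`, realized as the space of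
sign-twisted `S_d`-equivariant linear endomorphisms of `F[I(n,d)]`,
where `I(n,d) = (Fin d → Fin n)` and `w ∈ S_d` acts by `f ↦ f(· ∘ w)`. -/
def schurMinus (F : Type*) [Field F] (n d : ℕ) :
    Submodule F (((Fin d → Fin n) → F) →ₗ[F] ((Fin d → Fin n) → F)) where
  carrier := {T | ∀ (w : Equiv.Perm (Fin d)) (f : (Fin d → Fin n) → F) (v : Fin d → Fin n),
    T (fun u => f (u ∘ w)) v = ((Equiv.Perm.sign w : ℤ) : F) * T f (v ∘ w)}
  add_mem' := by
    intro a b ha hb w f v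
    simp only [LinearMap.add_apply, Pi.add_apply, ha w f v, hb w f v]
    ring
  zero_mem' := by intro w f v; simp
  smul_mem' := by
    intro c T hT w f v
    simp only [LinearMap.smul_apply, Pi.smul_apply, smul_eq_mul, hT w f v]
    ring

namespace Stmt9Aux

variable {F : Type*} [Field F] {n d : ℕ}

abbrev Pt (n : ℕ) := Fin n × Fin n
abbrev Subs (n d : ℕ) := {E : Finset (Pt n) // E.card = d}

lemma mem_schurMinus {T : ((Fin d → Fin n) → F) →ₗ[F] ((Fin d → Fin n) → F)} :
    T ∈ schurMinus F n d ↔ ∀ (w : Equiv.Perm (Fin d)) (f : (Fin d → Fin n) → F)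
      (v : Fin d → Fin n),
      T (fun u => f (u ∘ w)) v = ((Equiv.Perm.sign w : ℤ) : F) * T f (v ∘ w) := Iff.rfl

noncomputable def enumE (E : Subs n d) : ↥(E.1) ≃ Fin d :=
  Fintype.equivFinOfCardEq ((Fintype.card_coe _).trans E.2)

noncomputable def enumF (E : Subs n d) : Fin d → Pt n := fun i => ((enumE E).symm i : Pt n)

lemma enumF_inj (E : Subs n d) : Function.Injective (enumF E) :=
  fun _ _ h => (enumE E).symm.injective (Subtype.ext h)

lemma image_enumF (E : Subs n d) : Finset.univ.image (enumF E) = E.1 := by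
  ext x
  simp only [Finset.mem_image, Finset.mem_univ, true_and]
  constructor
  · rintro ⟨i, rfl⟩; exact ((enumE E).symm i).2
  · intro hx; exact ⟨enumE E ⟨x, hx⟩, by simp [enumF]⟩

def himg (h : Fin d → Pt n) : Finset (Pt n) := Finset.univ.image h

lemma himg_card {h : Fin d → Pt n} (hinj : Function.Injective h) : (himg h).card = d := by
  rw [himg, Finset.card_image_of_injective _ hinj, Finset.card_univ, Fintype.card_fin]

noncomputable def hE {h : Fin d → Pt n} (hinj : Function.Injective h) : Subs n d :=
  ⟨himg h, himg_card hinj⟩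

lemma mem_himg (h : Fin d → Pt n) (i : Fin d) : h i ∈ himg h :=
  Finset.mem_image_of_mem _ (Finset.mem_univ i)

noncomputable def sigma {h : Fin d → Pt n} (hinj : Function.Injective h) :
    Equiv.Perm (Fin d) :=
  (Equiv.ofBijective (fun i => (⟨h i, mem_himg h i⟩ : ↥(himg h)))
    ((Fintype.bijective_iff_injective_and_card _).2
      ⟨fun i j hij => hinj (congrArg Subtype.val hij),
       by rw [Fintype.card_fin, Fintype.card_coe, himg_card hinj]⟩)).trans (enumE (hE hinj))

lemma enumE_congr {E E' : Subs n d} (hEE' : E = E') (x : Pt n) (hx : x ∈ E.1)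
    (hx' : x ∈ E'.1) : enumE E ⟨x, hx⟩ = enumE E' ⟨x, hx'⟩ := by subst hEE'; rfl

lemma himg_comp (h : Fin d → Pt n) (w : Equiv.Perm (Fin d)) : himg (h ∘ ⇑w) = himg h := by
  ext x
  simp only [himg, Finset.mem_image, Finset.mem_univ, true_and, Function.comp_apply]
  constructor
  · rintro ⟨i, rfl⟩; exact ⟨w i, rfl⟩
  · rintro ⟨i, rfl⟩; exact ⟨w.symm i, by simp⟩

lemma enumF_sigma {h : Fin d → Pt n} (hinj : Function.Injective h) (i : Fin d) :
    enumF (hE hinj) (sigma hinj i) = h i := by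
  show ((enumE (hE hinj)).symm (sigma hinj i) : Pt n) = h i
  have h1 : sigma hinj i = enumE (hE hinj) ⟨h i, mem_himg h i⟩ := rfl
  rw [h1, Equiv.symm_apply_apply]

lemma sigma_comp {h : Fin d → Pt n} (hinj : Function.Injective h) (w : Equiv.Perm (Fin d)) :
    sigma (hinj.comp w.injective) = sigma hinj * w := by
  apply Equiv.ext; intro i
  have h1 : sigma (hinj.comp w.injective) i
      = enumE (hE (hinj.comp w.injective)) ⟨h (w i), mem_himg (h ∘ ⇑w) i⟩ := rfl
  have h2 : hE (hinj.comp w.injective) = hE hinj := Subtype.ext (himg_comp h w)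
  rw [h1, enumE_congr h2 (h (w i)) (mem_himg (h ∘ ⇑w) i) (mem_himg h (w i))]
  rfl

noncomputable def Nc (c : Subs n d → F) (h : Fin d → Pt n) : F :=
  if hinj : Function.Injective h then
    ((Equiv.Perm.sign (sigma hinj) : ℤ) : F) * c (hE hinj) else 0

lemma Nc_pos (c : Subs n d → F) {h : Fin d → Pt n} (hinj : Function.Injective h) :
    Nc c h = ((Equiv.Perm.sign (sigma hinj) : ℤ) : F) * c (hE hinj) := dif_pos hinj

lemma Nc_neg (c : Subs n d → F) {h : Fin d → Pt n} (hni : ¬ Function.Injective h) :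
    Nc c h = 0 := dif_neg hni

lemma Nc_comp (c : Subs n d → F) (h : Fin d → Pt n) (w : Equiv.Perm (Fin d)) :
    Nc c (h ∘ ⇑w) = ((Equiv.Perm.sign w : ℤ) : F) * Nc c h := by
  by_cases hinj : Function.Injective h
  · have hinj' : Function.Injective (h ∘ ⇑w) := hinj.comp w.injective
    rw [Nc_pos c hinj', Nc_pos c hinj]
    have h1 : sigma hinj' = sigma hinj * w := sigma_comp hinj w
    have h2 : hE hinj' = hE hinj := Subtype.ext (himg_comp h w)
    rw [h1, h2, map_mul, Units.val_mul, Int.cast_mul]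
    ring
  · have hinj' : ¬ Function.Injective (h ∘ ⇑w) := by
      intro hc
      apply hinj
      intro a b hab
      have h3 : w.symm a = w.symm b := hc (by simp [Function.comp_apply, hab])
      simpa using congrArg w h3
    rw [Nc_neg c hinj', Nc_neg c hinj, mul_zero]

lemma Nc_enumF (c : Subs n d → F) (E : Subs n d) : Nc c (enumF E) = c E := by
  have hinj := enumF_inj E
  rw [Nc_pos c hinj]
  have hEe : hE hinj = E := Subtype.ext (image_enumF E)
  have hσ : sigma hinj = 1 := by
    apply Equiv.ext; intro i
    have h1 : sigma hinj i = enumE (hE hinj) ⟨enumF E i, mem_himg (enumF E) i⟩ := rfl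
    rw [h1, enumE_congr hEe (enumF E i) (mem_himg (enumF E) i) (((enumE E).symm i).2)]
    have h3 : (⟨enumF E i, ((enumE E).symm i).2⟩ : {x // x ∈ E.1}) = (enumE E).symm i :=
      Subtype.ext rfl
    rw [h3, Equiv.apply_symm_apply]
    rfl
  rw [hσ, hEe, map_one]
  simp

def Mmat (T : ((Fin d → Fin n) → F) →ₗ[F] ((Fin d → Fin n) → F)) (h : Fin d → Pt n) : F :=
  T (Pi.single (fun i => (h i).2) 1) (fun i => (h i).1)

lemma single_precomp (g : Fin d → Fin n) (w : Equiv.Perm (Fin d)) :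
    (fun u : Fin d → Fin n => (Pi.single (g ∘ ⇑w) (1:F) : (Fin d → Fin n) → F) (u ∘ ⇑w))
      = (Pi.single g (1:F) : (Fin d → Fin n) → F) := by
  funext u
  by_cases hu : u = g
  · subst hu; simp
  · have h1 : u ∘ ⇑w ≠ g ∘ ⇑w := by
      intro hc
      apply hu
      funext i
      have := congrFun hc (w.symm i)
      simpa using this
    rw [Pi.single_apply, Pi.single_apply, if_neg h1, if_neg hu]

lemma signF_sq (w : Equiv.Perm (Fin d)) :
    ((Equiv.Perm.sign w : ℤ) : F) * ((Equiv.Perm.sign w : ℤ) : F) = 1 := by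
  rcases Int.units_eq_one_or (Equiv.Perm.sign w) with h | h <;> rw [h] <;> norm_num

lemma Mmat_comp {T : ((Fin d → Fin n) → F) →ₗ[F] ((Fin d → Fin n) → F)}
    (hT : T ∈ schurMinus F n d) (h : Fin d → Pt n) (w : Equiv.Perm (Fin d)) :
    Mmat T (h ∘ ⇑w) = ((Equiv.Perm.sign w : ℤ) : F) * Mmat T h := by
  have key := mem_schurMinus.mp hT w (Pi.single ((fun i => (h i).2) ∘ ⇑w) 1)
    (fun i => (h i).1)
  rw [single_precomp] at key
  have hM : Mmat T h = ((Equiv.Perm.sign w : ℤ) : F) * Mmat T (h ∘ ⇑w) := key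
  rw [hM, ← mul_assoc, signF_sq, one_mul]

lemma Mmat_ninj {T : ((Fin d → Fin n) → F) →ₗ[F] ((Fin d → Fin n) → F)}
    (hT : T ∈ schurMinus F n d) (h2 : (2:F) ≠ 0) {h : Fin d → Pt n}
    (hni : ¬ Function.Injective h) : Mmat T h = 0 := by
  obtain ⟨i, j, hij, hne⟩ := Function.not_injective_iff.1 hni
  have hcomp : h ∘ ⇑(Equiv.swap i j) = h := by
    funext k
    rcases eq_or_ne k i with rfl | hki
    · simp [Equiv.swap_apply_left, hij]
    rcases eq_or_ne k j with rfl | hkj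
    · simp [Equiv.swap_apply_right, hij]
    · simp [Equiv.swap_apply_of_ne_of_ne hki hkj]
  have h3 := Mmat_comp hT h (Equiv.swap i j)
  rw [hcomp, Equiv.Perm.sign_swap hne] at h3
  have hcast : ((((-1:ℤˣ)) : ℤ) : F) = -1 := by simp
  rw [hcast] at h3
  have h5 : (2:F) * Mmat T h = 0 := by linear_combination h3
  rcases mul_eq_zero.1 h5 with h | h
  · exact absurd h h2
  · exact h

lemma expand (T : ((Fin d → Fin n) → F) →ₗ[F] ((Fin d → Fin n) → F))
    (f : (Fin d → Fin n) → F) (v : Fin d → Fin n) :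
    T f v = ∑ g : Fin d → Fin n, f g * T (Pi.single g 1) v := by
  conv_lhs => rw [← Finset.univ_sum_single f]
  rw [map_sum, Finset.sum_apply]
  refine Finset.sum_congr rfl fun g _ => ?_
  have h1 : (Pi.single g (f g) : (Fin d → Fin n) → F)
      = f g • (Pi.single g (1:F) : (Fin d → Fin n) → F) := by
    funext x
    by_cases hx : x = g <;> simp [Pi.single_apply, hx]
  rw [h1, map_smul]
  simp

noncomputable def Tc (c : Subs n d → F) :
    ((Fin d → Fin n) → F) →ₗ[F] ((Fin d → Fin n) → F) where
  toFun f := fun v => ∑ g : Fin d → Fin n, f g * Nc c (fun i => (v i, g i))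
  map_add' f f' := by
    funext v
    simp [add_mul, Finset.sum_add_distrib]
  map_smul' a f := by
    funext v
    simp [Finset.mul_sum, mul_assoc]

lemma Tc_mem (c : Subs n d → F) : Tc c ∈ schurMinus F n d := by
  rw [mem_schurMinus]
  intro w f v
  show (∑ g : Fin d → Fin n, f (g ∘ ⇑w) * Nc c (fun i => (v i, g i)))
      = ((Equiv.Perm.sign w : ℤ) : F)
        * ∑ g : Fin d → Fin n, f g * Nc c (fun i => ((v ∘ ⇑w) i, g i))
  have step1 : ∀ g : Fin d → Fin n,
      Nc c (fun i => (v i, g i))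
        = ((Equiv.Perm.sign w : ℤ) : F) * Nc c (fun i => (v (w i), g (w i))) := by
    intro g
    have hpair : (fun i => (v i, g i)) = (fun i => (v (w i), g (w i))) ∘ ⇑w.symm := by
      funext i; simp
    rw [hpair, Nc_comp]
    have hs : Equiv.Perm.sign w.symm = Equiv.Perm.sign w := Equiv.Perm.sign_symm w
    rw [hs]
  calc (∑ g : Fin d → Fin n, f (g ∘ ⇑w) * Nc c (fun i => (v i, g i)))
      = ∑ g : Fin d → Fin n, ((Equiv.Perm.sign w : ℤ) : F)
          * (f (g ∘ ⇑w) * Nc c (fun i => (v (w i), g (w i)))) := by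
        refine Finset.sum_congr rfl fun g _ => ?_
        rw [step1 g]; ring
    _ = ((Equiv.Perm.sign w : ℤ) : F)
          * ∑ g : Fin d → Fin n, f (g ∘ ⇑w) * Nc c (fun i => (v (w i), g (w i))) := by
        rw [← Finset.mul_sum]
    _ = ((Equiv.Perm.sign w : ℤ) : F)
          * ∑ g : Fin d → Fin n, f g * Nc c (fun i => ((v ∘ ⇑w) i, g i)) := by
        congr 1
        exact Fintype.sum_equiv
          ⟨fun g => g ∘ ⇑w, fun g => g ∘ ⇑w.symm,
            fun g => by funext i; simp, fun g => by funext i; simp⟩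
          _ _ (fun g => rfl)

noncomputable def equivSchur (h2 : (2:F) ≠ 0) :
    (schurMinus F n d) ≃ₗ[F] (Subs n d → F) where
  toFun T := fun E => Mmat (T : ((Fin d → Fin n) → F) →ₗ[F] ((Fin d → Fin n) → F)) (enumF E)
  map_add' T T' := by funext E; simp [Mmat]
  map_smul' a T := by funext E; simp [Mmat]
  invFun c := ⟨Tc c, Tc_mem c⟩
  left_inv := fun T => by
    apply Subtype.ext
    apply LinearMap.ext; intro f
    funext v
    set c : Subs n d → F :=
      fun E => Mmat (T : ((Fin d → Fin n) → F) →ₗ[F] ((Fin d → Fin n) → F)) (enumF E) with hc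
    have key : ∀ h : Fin d → Pt n,
        Nc c h = Mmat (T : ((Fin d → Fin n) → F) →ₗ[F] ((Fin d → Fin n) → F)) h := by
      intro h
      by_cases hinj : Function.Injective h
      · rw [Nc_pos c hinj]
        have hh : h = enumF (hE hinj) ∘ ⇑(sigma hinj) := by
          funext i; exact (enumF_sigma hinj i).symm
        have h4 : Mmat (T : ((Fin d → Fin n) → F) →ₗ[F] ((Fin d → Fin n) → F)) h
            = ((Equiv.Perm.sign (sigma hinj) : ℤ) : F)
              * Mmat (T : ((Fin d → Fin n) → F) →ₗ[F] ((Fin d → Fin n) → F))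
                (enumF (hE hinj)) := by
          conv_lhs => rw [hh]
          exact Mmat_comp T.2 (enumF (hE hinj)) (sigma hinj)
        rw [h4]
      · rw [Nc_neg c hinj, Mmat_ninj T.2 h2 hinj]
    show (∑ g : Fin d → Fin n, f g * Nc c (fun i => (v i, g i)))
        = (T : ((Fin d → Fin n) → F) →ₗ[F] ((Fin d → Fin n) → F)) f v
    rw [expand (T : ((Fin d → Fin n) → F) →ₗ[F] ((Fin d → Fin n) → F)) f v]
    refine Finset.sum_congr rfl fun g _ => ?_
    rw [key]
    rfl
  right_inv := fun c => by
    funext E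
    have h1 : Mmat (Tc c) (enumF E) = Nc c (fun i => ((enumF E i).1, (enumF E i).2)) := by
      show (∑ g : Fin d → Fin n,
          (Pi.single (fun i => (enumF E i).2) (1:F) : (Fin d → Fin n) → F) g
          * Nc c (fun i => ((enumF E i).1, g i))) = _
      rw [Finset.sum_eq_single (fun i => (enumF E i).2)]
      · simp
      · intro g _ hg
        rw [Pi.single_eq_of_ne hg, zero_mul]
      · intro hmem; exact absurd (Finset.mem_univ _) hmem
    have h2' : (fun i => ((enumF E i).1, (enumF E i).2)) = enumF E := by
      funext i; rfl
    show Mmat (Tc c) (enumF E) = c E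
    rw [h1, h2', Nc_enumF]

end Stmt9Aux

/-- for `char F ≠ 2`, the dimension of `S_F⁻(n,d)` equals the number of simple
bipartite graphs on `[n'] ⊔ [n]` with `d` edges — i.e. `d`-element subsets of `[n'] × [n]` —
which is `binom(n², d)`. -/
theorem stmt_9 (F : Type*) [Field F] (h2 : (2 : F) ≠ 0) (n d : ℕ) (hn : 0 < n) (hd : 0 < d) :
    Module.finrank F (schurMinus F n d) =
      Nat.card {E : Finset (Fin n × Fin n) // E.card = d} ∧
    Module.finrank F (schurMinus F n d) = (n ^ 2).choose d := by
  have e := Stmt9Aux.equivSchur (F := F) (n := n) (d := d) h2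
  have hr : Module.finrank F (schurMinus F n d)
      = Fintype.card {E : Finset (Fin n × Fin n) // E.card = d} := by
    rw [e.finrank_eq, Module.finrank_pi]
  constructor
  · rw [hr, Nat.card_eq_fintype_card]
  · rw [hr, Fintype.card_finset_len]
    congr 1
    rw [Fintype.card_prod, Fintype.card_fin, sq]
end

section
/- For n ≥ d, the map w ↦ ξ_{Γ(w)} is an injective monoid/group homomorphism from S_d into the Schur algebra S_F(n,d): for all w_1, w_2 ∈ S_d one has ξ_{Γ(w_1)} · ξ_{Γ(w_2)} = ξ_{Γ(w_1 w_2)}, where Γ(w) is the bipartite graph on [n'] ⊔ [n] whose edges are (i', w(i)) for 1 ≤ i ≤ d. -/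
/-- The integral operator associated to the integral kernel `κ`. -/
noncomputable def intOp {F X Y : Type*} [Field F] [Fintype Y] (κ : X → Y → F) :
    (Y → F) →ₗ[F] (X → F) where
  toFun f x := ∑ y, κ x y * f y
  map_add' f g := by
    funext x
    simp [mul_add, Finset.sum_add_distrib]
  map_smul' c f := by
    funext x
    simp only [Pi.smul_apply, smul_eq_mul, RingHom.id_apply, Finset.mul_sum]
    exact Finset.sum_congr rfl (fun y _ => by ring)

open scoped Classical in
/-- The integral kernel of the basis element `ξ_{Γ(w)}` of the Schur algebra, where `Γ(w)` is
the bipartite graph on `[n'] ⊔ [n]` with edges `(i', w(i))` for `1 ≤ i ≤ d`: its value on a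
pair of tuples in `I(n,d)` is the indicator that the associated labelled bipartite graph has
underlying multigraph `Γ(w)`. -/
noncomputable def xiPermKer {n d : ℕ} (hnd : d ≤ n) (F : Type*) [Field F]
    (w : Equiv.Perm (Fin d)) (x y : Fin d → Fin n) : F :=
  if ∃ u : Equiv.Perm (Fin d), ∀ s : Fin d,
      x s = Fin.castLE hnd (w (u s)) ∧ y s = Fin.castLE hnd (u s)
  then 1 else 0

open scoped Classical

section Aux

variable {n d : ℕ} (hnd : d ≤ n) {F : Type*} [Field F]

lemma xi_one {w : Equiv.Perm (Fin d)} {x y : Fin d → Fin n} (u : Equiv.Perm (Fin d))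
    (hx : ∀ s, x s = Fin.castLE hnd (w (u s))) (hy : ∀ s, y s = Fin.castLE hnd (u s)) :
    xiPermKer hnd F w x y = 1 := by
  rw [xiPermKer, if_pos ⟨u, fun s => ⟨hx s, hy s⟩⟩]

lemma xi_cases {w : Equiv.Perm (Fin d)} {x y : Fin d → Fin n}
    (h : xiPermKer hnd F w x y ≠ 0) :
    ∃ u : Equiv.Perm (Fin d), ∀ s : Fin d,
      x s = Fin.castLE hnd (w (u s)) ∧ y s = Fin.castLE hnd (u s) := by
  by_contra hc
  exact h (if_neg hc)

lemma castLE_inj {a b : Fin d} (h : Fin.castLE hnd a = Fin.castLE hnd b) : a = b :=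
  Fin.castLE_injective hnd h

lemma comp_ker (w₁ w₂ : Equiv.Perm (Fin d)) (x z : Fin d → Fin n) :
    ∑ y : Fin d → Fin n, xiPermKer hnd F w₁ x y * xiPermKer hnd F w₂ y z
      = xiPermKer hnd F (w₁ * w₂) x z := by
  by_cases h : ∃ u : Equiv.Perm (Fin d), ∀ s : Fin d,
      x s = Fin.castLE hnd ((w₁ * w₂) (u s)) ∧ z s = Fin.castLE hnd (u s)
  · obtain ⟨u, hu⟩ := h
    rw [xiPermKer, if_pos ⟨u, hu⟩]
    rw [Finset.sum_eq_single (fun s => Fin.castLE hnd (w₂ (u s)))]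
    · rw [xi_one hnd (x := x) (y := fun s => Fin.castLE hnd (w₂ (u s))) (w₂ * u)
          (fun s => (hu s).1) (fun s => rfl),
        xi_one hnd (x := fun s => Fin.castLE hnd (w₂ (u s))) (y := z) u
          (fun s => rfl) (fun s => (hu s).2), one_mul]
    · intro y _ hy
      rcases eq_or_ne (xiPermKer hnd F w₂ y z) 0 with h0 | h0
      · rw [h0, mul_zero]
      · obtain ⟨u₂, hu₂⟩ := xi_cases hnd h0
        exfalso
        apply hy
        funext s
        have : u₂ s = u s := castLE_inj hnd ((hu₂ s).2.symm.trans (hu s).2)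
        rw [(hu₂ s).1, this]
    · intro hmem
      exact absurd (Finset.mem_univ _) hmem
  · rw [xiPermKer, if_neg h]
    apply Finset.sum_eq_zero
    intro y _
    rcases eq_or_ne (xiPermKer hnd F w₂ y z) 0 with h0 | h0
    · rw [h0, mul_zero]
    rcases eq_or_ne (xiPermKer hnd F w₁ x y) 0 with h1 | h1
    · rw [h1, zero_mul]
    obtain ⟨u₂, hu₂⟩ := xi_cases hnd h0
    obtain ⟨u₁, hu₁⟩ := xi_cases hnd h1
    exfalso
    apply h
    refine ⟨u₂, fun s => ⟨?_, (hu₂ s).2⟩⟩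
    have : u₁ s = w₂ (u₂ s) := castLE_inj hnd ((hu₁ s).2.symm.trans (hu₂ s).1)
    rw [(hu₁ s).1, this]
    rfl

lemma ker_comp_perm (w u : Equiv.Perm (Fin d)) (v z : Fin d → Fin n) :
    xiPermKer hnd F w (v ∘ u) (z ∘ u) = xiPermKer hnd F w v z := by
  rw [xiPermKer, xiPermKer]
  refine if_congr ⟨?_, ?_⟩ rfl rfl
  · rintro ⟨q, hq⟩
    refine ⟨q * u⁻¹, fun s => ?_⟩
    have h := hq (u⁻¹ s)
    simpa [Function.comp] using h
  · rintro ⟨p, hp⟩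
    exact ⟨p * u, fun s => hp (u s)⟩

lemma intOp_apply {X Y : Type*} [Fintype Y] (κ : X → Y → F) (f : Y → F) (x : X) :
    intOp κ f x = ∑ y, κ x y * f y := rfl

end Aux

/-- for `n ≥ d`, the map `w ↦ ξ_{Γ(w)}` is an injective homomorphism from
`S_d` into the Schur algebra: `ξ_{Γ(w₁)} ξ_{Γ(w₂)} = ξ_{Γ(w₁ w₂)}`, each `ξ_{Γ(w)}` being
an `S_d`-equivariant endomorphism of `F[I(n,d)]`. -/
theorem stmt_11 {n d : ℕ} (hnd : d ≤ n) (F : Type*) [Field F] :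
    (∀ w₁ w₂ : Equiv.Perm (Fin d),
      intOp (xiPermKer hnd F w₁) ∘ₗ intOp (xiPermKer hnd F w₂) =
        intOp (xiPermKer hnd F (w₁ * w₂))) ∧
    Function.Injective (fun w : Equiv.Perm (Fin d) => intOp (xiPermKer hnd F w)) ∧
    (∀ (w : Equiv.Perm (Fin d)) (u : Equiv.Perm (Fin d)) (f : (Fin d → Fin n) → F)
      (v : Fin d → Fin n),
      intOp (xiPermKer hnd F w) (fun z => f (z ∘ u)) v =
        intOp (xiPermKer hnd F w) f (v ∘ u)) := by
  refine ⟨?_, ?_, ?_⟩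
  · intro w₁ w₂
    apply LinearMap.ext
    intro f
    funext v
    rw [LinearMap.comp_apply, intOp_apply, intOp_apply]
    calc ∑ y, xiPermKer hnd F w₁ v y * intOp (xiPermKer hnd F w₂) f y
        = ∑ y, ∑ z, xiPermKer hnd F w₁ v y * (xiPermKer hnd F w₂ y z * f z) := by
          refine Finset.sum_congr rfl fun y _ => ?_
          rw [intOp_apply, Finset.mul_sum]
      _ = ∑ z, (∑ y, xiPermKer hnd F w₁ v y * xiPermKer hnd F w₂ y z) * f z := by
          rw [Finset.sum_comm]
          refine Finset.sum_congr rfl fun z _ => ?_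
          rw [Finset.sum_mul]
          exact Finset.sum_congr rfl fun y _ => by ring
      _ = ∑ z, xiPermKer hnd F (w₁ * w₂) v z * f z := by
          refine Finset.sum_congr rfl fun z _ => ?_
          rw [comp_ker]
  · intro w₁ w₂ h
    classical
    set c1 : Fin d → Fin n := fun s => Fin.castLE hnd s with hc1
    set f : (Fin d → Fin n) → F := fun z => if z = c1 then 1 else 0 with hf
    have key : ∀ w : Equiv.Perm (Fin d) , ∀ x, intOp (xiPermKer hnd F w) f x
        = xiPermKer hnd F w x c1 := by
      intro w x
      rw [intOp_apply]
      rw [Finset.sum_eq_single c1]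
      · simp [hf]
      · intro y _ hy
        simp [hf, hy]
      · intro hmem
        exact absurd (Finset.mem_univ _) hmem
    have h' : intOp (xiPermKer hnd F w₁) = intOp (xiPermKer hnd F w₂) := h
    set x : Fin d → Fin n := fun s => Fin.castLE hnd (w₁ s) with hx
    have h1 : xiPermKer hnd F w₁ x c1 = xiPermKer hnd F w₂ x c1 := by
      rw [← key w₁ x, ← key w₂ x, h']
    have h2 : xiPermKer hnd F w₁ x c1 = (1 : F) :=
      xi_one hnd (x := x) (y := c1) (1 : Equiv.Perm (Fin d)) (fun s => rfl) (fun s => rfl)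
    have hne : xiPermKer hnd F w₂ x c1 ≠ 0 := by
      rw [← h1, h2]; exact one_ne_zero
    obtain ⟨u, hu⟩ := xi_cases hnd hne
    apply Equiv.ext
    intro s
    have hus : u s = s := (castLE_inj hnd (hu s).2).symm
    have : Fin.castLE hnd (w₁ s) = Fin.castLE hnd (w₂ s) := by
      have := (hu s).1
      rw [hus] at this
      exact this
    exact castLE_inj hnd this
  · intro w u f v
    rw [intOp_apply, intOp_apply]
    refine Fintype.sum_bijective (fun z => z ∘ u) ?_ _ _ fun z => ?_
    · exact (Equiv.arrowCongr (u⁻¹ : Equiv.Perm (Fin d)) (Equiv.refl (Fin n))).bijective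
    · rw [ker_comp_perm]
end

section
/- Let AS = S ⊕ S⁻ be a ℤ/2ℤ-graded algebra, and let M be a simple S-module with DM = S⁻ ⊗_S M simple, DM not isomorphic to M, and η_M: D²M → M nonzero. Then the induced AS-module AS ⊗_S M is simple, and it is (up to isomorphism) the unique simple AS-module whose restriction to S contains M as a submodule. -/
/-- A `ℤ/2ℤ`-grading of a ring `AS`: a subring `S` (the even part) and an additive subgroup
`Sm` (the odd part) with `S·Sm ⊆ Sm`, `Sm·S ⊆ Sm` and `Sm·Sm ⊆ S`. -/
structure GradedPair (AS : Type*) [Ring AS] where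
  S : Subring AS
  Sm : AddSubgroup AS
  smul_mem : ∀ s ∈ S, ∀ x ∈ Sm, s * x ∈ Sm
  mul_smem : ∀ x ∈ Sm, ∀ s ∈ S, x * s ∈ Sm
  mm_mem : ∀ x ∈ Sm, ∀ y ∈ Sm, x * y ∈ S

namespace GradedPair

variable {AS : Type*} [Ring AS] (g : GradedPair AS)

/-- The odd part `S⁻` is a left module over the even part `S`, by multiplication. -/
instance : SMul g.S g.Sm :=
  ⟨fun s x => ⟨(s : AS) * (x : AS), g.smul_mem _ s.2 _ x.2⟩⟩

@[simp] lemma coe_smul (s : g.S) (x : g.Sm) : ((s • x : g.Sm) : AS) = (s : AS) * x := rfl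

instance : MulAction g.S g.Sm where
  one_smul x := Subtype.ext (one_mul _)
  mul_smul s t x := Subtype.ext (mul_assoc _ _ _)

instance : DistribMulAction g.S g.Sm where
  smul_zero s := Subtype.ext (mul_zero _)
  smul_add s x y := Subtype.ext (mul_add _ _ _)

instance : Module g.S g.Sm where
  add_smul s t x := Subtype.ext (add_mul _ _ _)
  zero_smul x := Subtype.ext (zero_mul _)

/-- The element `x · s` of `S⁻`, for `x ∈ S⁻` and `s ∈ S` (the right action). -/
def rmul (x : g.Sm) (s : g.S) : g.Sm :=
  ⟨(x : AS) * (s : AS), g.mul_smem _ x.2 _ s.2⟩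

/-- The element `x · y` of `S`, for `x, y ∈ S⁻`. -/
def mm (x y : g.Sm) : g.S := ⟨(x : AS) * (y : AS), g.mm_mem _ x.2 _ y.2⟩

variable (N : Type*) [AddCommGroup N] [Module g.S N]

/-- The defining relations of the tensor product `S⁻ ⊗_S N`, inside the free `S`-module
on `S⁻ × N`: biadditivity, `S`-balancedness, and left `S`-linearity in the first factor. -/
noncomputable def TRel : Submodule g.S ((g.Sm × N) →₀ g.S) :=
  Submodule.span g.S
    ({z | ∃ (x x' : g.Sm) (n : N), z = Finsupp.single (x + x', n) 1 -
        Finsupp.single (x, n) 1 - Finsupp.single (x', n) 1} ∪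
     {z | ∃ (x : g.Sm) (n n' : N), z = Finsupp.single (x, n + n') 1 -
        Finsupp.single (x, n) 1 - Finsupp.single (x, n') 1} ∪
     {z | ∃ (x : g.Sm) (s : g.S) (n : N), z = Finsupp.single (g.rmul x s, n) 1 -
        Finsupp.single (x, s • n) 1} ∪
     {z | ∃ (s : g.S) (x : g.Sm) (n : N), z = Finsupp.single (s • x, n) 1 -
        s • Finsupp.single (x, n) 1})

/-- The tensor product `S⁻ ⊗_S N`, as a left `S`-module (the Koszul dual `D(N)`). -/
abbrev T := ((g.Sm × N) →₀ g.S) ⧸ g.TRel N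

variable {N}

/-- The canonical map `S⁻ × N → S⁻ ⊗_S N`, `(x, n) ↦ x ⊗ n`. -/
noncomputable def tmk (x : g.Sm) (n : N) : g.T N :=
  Submodule.Quotient.mk (Finsupp.single (x, n) 1)

end GradedPair


namespace GradedPair

variable {AS : Type*} [Ring AS] (g : GradedPair AS)
variable (M : Type*) [AddCommGroup M] [Module g.S M]

/-- The defining relations of the induced module `AS ⊗_S M`, inside the free `AS`-module
on `M`: additivity in `M` and `S`-balancedness. -/
noncomputable def TARel : Submodule AS (M →₀ AS) :=
  Submodule.span AS
    ({z | ∃ m m' : M, z = Finsupp.single (m + m') 1 - Finsupp.single m 1 -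
        Finsupp.single m' 1} ∪
     {z | ∃ (s : g.S) (m : M), z = Finsupp.single (s • m) 1 -
        (s : AS) • Finsupp.single m 1})

/-- The induced `AS`-module `AS ⊗_S M`. -/
abbrev TA := (M →₀ AS) ⧸ g.TARel M

variable {M}

/-- The canonical map `AS × M → AS ⊗_S M`, `(a, m) ↦ a ⊗ m`. -/
noncomputable def tmkA (a : AS) (m : M) : g.TA M :=
  Submodule.Quotient.mk (Finsupp.single m a)

end GradedPair

/-!
As a left `S`-module, `AS ⊗_S M = (S ⊗_S M) ⊕ (S⁻ ⊗_S M) ≅ M ⊕ DM`; the summand `M` embeds because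
`a ⊗ m ↦ a₀ m`, with `a₀` the even part of `a`, is well defined. Since `M` and `DM` are simple and
not isomorphic, an `S`-submodule of `M ⊕ DM` meeting neither summand would be the graph of an
isomorphism, so a nonzero `AS`-submodule `U` contains `1 ⊗ M` or `DM`. In the first case `U` is
everything, as `1 ⊗ M` generates `AS ⊗_S M`; in the second, `x · (y ⊗ m) = 1 ⊗ (xy) m` with
`(xy) m ≠ 0` puts a nonzero element of `1 ⊗ M` into `U`, which brings us back to the first case.

For uniqueness, an injective `S`-linear `M → P` extends to a nonzero `AS`-linear map
`AS ⊗_S M → P`, which is an isomorphism by Schur's lemma.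
-/

theorem Submodule.toAddSubgroup_span_le_ker {R M Q : Type*} [Ring R] [AddCommGroup M]
    [Module R M] [AddCommGroup Q] (F : M →+ Q) {s : Set M}
    (hF : ∀ (c : R), ∀ x ∈ s, F (c • x) = 0) : (Submodule.span R s).toAddSubgroup ≤ F.ker :=
  fun _ hz => Submodule.closure_induction (p := fun z _ => F z = 0) (map_zero F)
    (fun _ _ _ _ hx hy => by rw [map_add, hx, hy, add_zero]) hF hz

theorem Submodule.eq_bot_of_comap_inl_eq_bot_of_comap_inr_eq_bot {R M N : Type*} [Ring R]
    [AddCommGroup M] [Module R M] [AddCommGroup N] [Module R N]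
    [IsSimpleModule R M] [IsSimpleModule R N] (hMN : IsEmpty (N ≃ₗ[R] M))
    {V : Submodule R (M × N)} (hl : V.comap (LinearMap.inl R M N) = ⊥)
    (hr : V.comap (LinearMap.inr R M N) = ⊥) : V = ⊥ := by
  by_contra hV
  have : Nontrivial V := Submodule.nontrivial_iff_ne_bot.mpr hV
  have inj₁ : Function.Injective ((LinearMap.fst R M N).comp V.subtype) := by
    rw [← LinearMap.ker_eq_bot, eq_bot_iff]
    rintro ⟨⟨m, n⟩, hv⟩ (rfl : m = 0)
    obtain rfl : n = 0 := (Submodule.mem_bot R).mp (hr ▸ hv : n ∈ (⊥ : Submodule R N))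
    exact Submodule.zero_mem _
  have inj₂ : Function.Injective ((LinearMap.snd R M N).comp V.subtype) := by
    rw [← LinearMap.ker_eq_bot, eq_bot_iff]
    rintro ⟨⟨m, n⟩, hv⟩ (rfl : n = 0)
    obtain rfl : m = 0 := (Submodule.mem_bot R).mp (hl ▸ hv : m ∈ (⊥ : Submodule R M))
    exact Submodule.zero_mem _
  let e₁ : V ≃ₗ[R] M := LinearEquiv.ofBijective _
    ⟨inj₁, LinearMap.surjective_of_ne_zero (LinearMap.ne_zero_of_injective inj₁)⟩
  have : IsSimpleModule R V := IsSimpleModule.congr e₁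
  exact hMN.false ((LinearEquiv.ofBijective _
    (LinearMap.bijective_of_ne_zero (LinearMap.ne_zero_of_injective inj₂))).symm.trans e₁)

namespace GradedPair

variable {AS : Type*} [Ring AS] (g : GradedPair AS)

def IsDirectSum : Prop := ∀ a : AS, ∃! p : g.S × g.Sm, a = (p.1 : AS) + (p.2 : AS)

section Decomposition

variable (hcompl : g.IsDirectSum)

noncomputable def decompose (a : AS) : g.S × g.Sm := (hcompl a).exists.choose

lemma eq_decompose (a : AS) :
    a = ((g.decompose hcompl a).1 : AS) + ((g.decompose hcompl a).2 : AS) :=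
  (hcompl a).exists.choose_spec

lemma decompose_eq {a : AS} {s : g.S} {x : g.Sm} (h : a = (s : AS) + (x : AS)) :
    g.decompose hcompl a = (s, x) :=
  (hcompl a).unique (g.eq_decompose hcompl a) h

noncomputable def evenPart : AS →+ g.S where
  toFun a := (g.decompose hcompl a).1
  map_zero' := by rw [g.decompose_eq hcompl (s := 0) (x := 0) (by simp)]
  map_add' a b := by
    rw [g.decompose_eq hcompl (a := a + b)
      (s := (g.decompose hcompl a).1 + (g.decompose hcompl b).1)
      (x := (g.decompose hcompl a).2 + (g.decompose hcompl b).2)]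
    conv_lhs => rw [g.eq_decompose hcompl a, g.eq_decompose hcompl b]
    push_cast
    abel

lemma evenPart_apply (a : AS) : g.evenPart hcompl a = (g.decompose hcompl a).1 := rfl

lemma evenPart_coe (s : g.S) : g.evenPart hcompl s = s := by
  rw [evenPart_apply, g.decompose_eq hcompl (s := s) (x := 0) (by simp)]

lemma evenPart_mul_coe (a : AS) (s : g.S) :
    g.evenPart hcompl (a * s) = g.evenPart hcompl a * s := by
  rw [evenPart_apply, evenPart_apply,
    g.decompose_eq hcompl (s := _ * s) (x := g.rmul (g.decompose hcompl a).2 s)]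
  conv_lhs => rw [g.eq_decompose hcompl a]
  simp [rmul, add_mul]

end Decomposition

section Tensor

variable {N : Type*} [AddCommGroup N] [Module g.S N] {Q : Type*} [AddCommGroup Q]

lemma mk_single_eq_smul_tmk (s : g.S) (x : g.Sm) (n : N) :
    (Submodule.Quotient.mk (Finsupp.single (x, n) s) : g.T N) = s • g.tmk x n := by
  rw [tmk, ← Submodule.Quotient.mk_smul, Finsupp.smul_single, smul_eq_mul, mul_one]

lemma T_induction {P : g.T N → Prop} (t : g.T N) (zero : P 0)
    (add : ∀ a b, P a → P b → P (a + b))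
    (smul_tmk : ∀ (s : g.S) (x : g.Sm) (n : N), P (s • g.tmk x n)) : P t := by
  obtain ⟨f, rfl⟩ := Submodule.Quotient.mk_surjective _ t
  induction f using Finsupp.induction with
  | zero => exact zero
  | single_add p s f _ _ ih =>
      rw [Submodule.Quotient.mk_add, ← Prod.mk.eta (p := p), mk_single_eq_smul_tmk]
      exact add _ _ (smul_tmk s p.1 p.2) ih

noncomputable def liftT (B : g.Sm →+ N →+ Q) (hB : ∀ x s n, B (g.rmul x s) n = B x (s • n)) :
    g.T N →+ Q :=
  QuotientAddGroup.lift (g.TRel N).toAddSubgroup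
    (Finsupp.liftAddHom fun p => (B.flip p.2).comp ((smulAddHom g.S g.Sm).flip p.1))
    (Submodule.toAddSubgroup_span_le_ker _ <| by
      rintro c z (((⟨x, x', n, rfl⟩ | ⟨x, n, n', rfl⟩) | ⟨x, s, n, rfl⟩) | ⟨s, x, n, rfl⟩) <;>
        simp only [smul_sub, Finsupp.smul_single, smul_eq_mul, mul_one, map_sub,
          Finsupp.liftAddHom_apply_single, AddMonoidHom.comp_apply, AddMonoidHom.flip_apply,
          smulAddHom_apply]
      · simp [smul_add]
      · simp
      · rw [show c • g.rmul x s = g.rmul (c • x) s from Subtype.ext (mul_assoc _ _ _).symm, hB,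
          sub_self]
      · rw [mul_smul, sub_self])

lemma liftT_mk (B : g.Sm →+ N →+ Q) (hB : ∀ x s n, B (g.rmul x s) n = B x (s • n))
    (f : (g.Sm × N) →₀ g.S) :
    g.liftT B hB (Submodule.Quotient.mk f) =
      Finsupp.liftAddHom (fun p => (B.flip p.2).comp ((smulAddHom g.S g.Sm).flip p.1)) f :=
  rfl

lemma liftT_smul_tmk (B : g.Sm →+ N →+ Q) (hB : ∀ x s n, B (g.rmul x s) n = B x (s • n))
    (s : g.S) (x : g.Sm) (n : N) : g.liftT B hB (s • g.tmk x n) = B (s • x) n := by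
  rw [← mk_single_eq_smul_tmk, liftT_mk]
  simp

lemma liftT_tmk (B : g.Sm →+ N →+ Q) (hB : ∀ x s n, B (g.rmul x s) n = B x (s • n))
    (x : g.Sm) (n : N) : g.liftT B hB (g.tmk x n) = B x n := by
  simpa using g.liftT_smul_tmk B hB 1 x n

lemma liftT_smul [Module g.S Q] (B : g.Sm →+ N →+ Q)
    (hB : ∀ x s n, B (g.rmul x s) n = B x (s • n)) (hBs : ∀ (s : g.S) x n, B (s • x) n = s • B x n)
    (s : g.S) (t : g.T N) : g.liftT B hB (s • t) = s • g.liftT B hB t := by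
  refine g.T_induction (P := fun t => g.liftT B hB (s • t) = s • g.liftT B hB t) t
    (by simp) (fun a b ha hb => by rw [smul_add, map_add, map_add, ha, hb, smul_add])
    fun s' x n => ?_
  rw [smul_smul, liftT_smul_tmk, liftT_smul_tmk, mul_smul, hBs]

end Tensor

section Induced

variable {N : Type*} [AddCommGroup N] [Module g.S N] {Q : Type*} [AddCommGroup Q]

lemma smul_tmkA (b a : AS) (n : N) : b • g.tmkA a n = g.tmkA (b * a) n := by
  rw [tmkA, tmkA, ← Submodule.Quotient.mk_smul, Finsupp.smul_single, smul_eq_mul]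

lemma tmkA_add_left (a b : AS) (n : N) : g.tmkA (a + b) n = g.tmkA a n + g.tmkA b n := by
  rw [tmkA, tmkA, tmkA, ← Submodule.Quotient.mk_add, Finsupp.single_add]

lemma tmkA_add_right (a : AS) (n n' : N) : g.tmkA a (n + n') = g.tmkA a n + g.tmkA a n' := by
  rw [tmkA, tmkA, tmkA, ← Submodule.Quotient.mk_add, Submodule.Quotient.eq]
  have h := (g.TARel N).smul_mem a (Submodule.subset_span (Or.inl ⟨n, n', rfl⟩))
  simpa [smul_sub, Finsupp.smul_single, sub_sub] using h

lemma tmkA_mul_coe (a : AS) (s : g.S) (n : N) : g.tmkA (a * s) n = g.tmkA a (s • n) := by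
  rw [tmkA, tmkA, Submodule.Quotient.eq]
  have h := (g.TARel N).smul_mem a (Submodule.subset_span (Or.inr ⟨s, n, rfl⟩))
  rw [← neg_mem_iff]
  simpa [smul_sub, Finsupp.smul_single, smul_smul] using h

lemma TA_induction {P : g.TA N → Prop} (v : g.TA N) (zero : P 0)
    (add : ∀ a b, P a → P b → P (a + b)) (tmkA : ∀ (a : AS) (n : N), P (g.tmkA a n)) : P v := by
  obtain ⟨f, rfl⟩ := Submodule.Quotient.mk_surjective _ v
  induction f using Finsupp.induction with
  | zero => exact zero
  | single_add n a f _ _ ih =>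
      rw [Submodule.Quotient.mk_add]
      exact add _ _ (tmkA a n) ih

noncomputable def liftTA (B : AS →+ N →+ Q) (hB : ∀ a (s : g.S) n, B (a * s) n = B a (s • n)) :
    g.TA N →+ Q :=
  QuotientAddGroup.lift (g.TARel N).toAddSubgroup (Finsupp.liftAddHom fun n => B.flip n)
    (Submodule.toAddSubgroup_span_le_ker _ <| by
      rintro c z (⟨n, n', rfl⟩ | ⟨s, n, rfl⟩) <;>
        simp only [smul_sub, Finsupp.smul_single, smul_eq_mul, mul_one, map_sub,
          Finsupp.liftAddHom_apply_single, AddMonoidHom.flip_apply]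
      · simp
      · rw [hB, sub_self])

lemma liftTA_tmkA (B : AS →+ N →+ Q) (hB : ∀ a (s : g.S) n, B (a * s) n = B a (s • n))
    (a : AS) (n : N) : g.liftTA B hB (g.tmkA a n) = B a n :=
  Finsupp.liftAddHom_apply_single _ _ _

noncomputable def tmkAHom : AS →+ N →+ g.TA N :=
  AddMonoidHom.mk' (fun a => AddMonoidHom.mk' (g.tmkA a) (g.tmkA_add_right a))
    fun a b => AddMonoidHom.ext fun n => g.tmkA_add_left a b n

noncomputable def inducedLift {P : Type*} [AddCommGroup P] [Module AS P] (f : N →ₗ[g.S] P) :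
    g.TA N →ₗ[AS] P :=
  (g.TARel N).liftQ (Finsupp.linearCombination AS f) <| by
    rw [TARel, Submodule.span_le]
    rintro z (⟨n, n', rfl⟩ | ⟨s, n, rfl⟩) <;> simp
    exact sub_self _

noncomputable def evenIncl : N →ₗ[g.S] g.TA N where
  toFun := g.tmkA 1
  map_add' := g.tmkA_add_right 1
  map_smul' s n := by
    rw [← g.tmkA_mul_coe, one_mul, RingHom.id_apply, Subring.smul_def, smul_tmkA, mul_one]

lemma evenIncl_apply (n : N) : g.evenIncl n = g.tmkA 1 n := rfl

lemma inducedLift_evenIncl {P : Type*} [AddCommGroup P] [Module AS P] (f : N →ₗ[g.S] P)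
    (n : N) : g.inducedLift f (g.evenIncl n) = f n := by
  rw [evenIncl_apply, inducedLift, tmkA, Submodule.liftQ_apply, Finsupp.linearCombination_single,
    one_smul]

lemma span_range_evenIncl : Submodule.span AS (Set.range (g.evenIncl (N := N))) = ⊤ := by
  refine eq_top_iff.mpr fun v _ => g.TA_induction v (Submodule.zero_mem _)
    (fun _ _ => Submodule.add_mem _) fun a n => ?_
  rw [← mul_one a, ← smul_tmkA]
  exact Submodule.smul_mem _ a (Submodule.subset_span ⟨n, rfl⟩)

noncomputable def oddIncl : g.T N →ₗ[g.S] g.TA N where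
  __ := g.liftT (g.tmkAHom.comp g.Sm.subtype) (g.tmkA_mul_coe · · ·)
  map_smul' := g.liftT_smul _ _ fun s x n => (g.smul_tmkA s x n).symm

lemma oddIncl_tmk (x : g.Sm) (n : N) : g.oddIncl (g.tmk x n) = g.tmkA x n :=
  g.liftT_tmk _ (g.tmkA_mul_coe · · ·) x n

lemma coe_smul_oddIncl_tmk (x y : g.Sm) (n : N) :
    (x : AS) • g.oddIncl (g.tmk y n) = g.evenIncl (g.mm x y • n) := by
  rw [oddIncl_tmk, smul_tmkA, evenIncl_apply, ← tmkA_mul_coe, one_mul]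
  rfl

end Induced

section Simplicity

variable {N : Type*} [AddCommGroup N] [Module g.S N]

noncomputable def evenProj (hcompl : g.IsDirectSum) : g.TA N →+ N :=
  g.liftTA ((smulAddHom g.S N).comp (g.evenPart hcompl)) fun a s n => by
    simp [evenPart_mul_coe, mul_smul]

lemma evenProj_evenIncl (hcompl : g.IsDirectSum) (n : N) : g.evenProj hcompl (g.evenIncl n) = n := by
  have h1 : g.evenPart hcompl 1 = 1 := by simpa using g.evenPart_coe hcompl 1
  exact (g.liftTA_tmkA _ _ 1 n).trans (by simp [h1])

lemma evenIncl_injective (hcompl : g.IsDirectSum) : Function.Injective (g.evenIncl (N := N)) :=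
  Function.LeftInverse.injective (g.evenProj_evenIncl hcompl)

lemma coprod_evenIncl_oddIncl_surjective (hcompl : g.IsDirectSum) :
    Function.Surjective (g.evenIncl.coprod g.oddIncl : N × g.T N →ₗ[g.S] g.TA N) := by
  rw [← LinearMap.range_eq_top, eq_top_iff]
  refine fun v _ => g.TA_induction v (Submodule.zero_mem _) (fun _ _ => Submodule.add_mem _)
    fun a n => ⟨((g.evenPart hcompl a) • n, g.tmk (g.decompose hcompl a).2 n), ?_⟩
  conv_rhs => rw [g.eq_decompose hcompl a]
  rw [LinearMap.coprod_apply, oddIncl_tmk, evenIncl_apply, ← tmkA_mul_coe, one_mul,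
    tmkA_add_left]
  rfl

theorem isSimpleModule_TA (hcompl : g.IsDirectSum) [IsSimpleModule g.S N]
    [IsSimpleModule g.S (g.T N)] (hniso : IsEmpty (g.T N ≃ₗ[g.S] N))
    (hη : ∃ (x y : g.Sm) (n : N), g.mm x y • n ≠ 0) : IsSimpleModule AS (g.TA N) := by
  have : Nontrivial N := IsSimpleModule.nontrivial g.S N
  have : Nontrivial (g.TA N) := (g.evenIncl_injective hcompl).nontrivial
  refine (isSimpleModule_iff AS (g.TA N)).mpr ⟨fun U => or_iff_not_imp_left.mpr fun hU => ?_⟩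
  set V := (U.restrictScalars g.S).comap (g.evenIncl.coprod g.oddIncl)
  have hV : V ≠ ⊥ := by
    obtain ⟨u, hu, hu0⟩ := U.ne_bot_iff.mp hU
    obtain ⟨p, rfl⟩ := g.coprod_evenIncl_oddIncl_surjective hcompl u
    exact V.ne_bot_iff.mpr ⟨p, hu, fun h => hu0 (h ▸ map_zero _)⟩
  have top_of_even : V.comap (LinearMap.inl g.S N (g.T N)) = ⊤ → U = ⊤ := fun h => by
    rw [eq_top_iff, ← g.span_range_evenIncl, Submodule.span_le]
    rintro _ ⟨n, rfl⟩
    simpa [V] using (h ▸ Submodule.mem_top : n ∈ V.comap (LinearMap.inl g.S N (g.T N)))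
  have even_of_odd : V.comap (LinearMap.inr g.S N (g.T N)) = ⊤ →
      V.comap (LinearMap.inl g.S N (g.T N)) ≠ ⊥ := fun h => by
    obtain ⟨x, y, n, hxyn⟩ := hη
    have hy : g.oddIncl (g.tmk y n) ∈ U := by
      simpa [V] using (h ▸ Submodule.mem_top : g.tmk y n ∈ V.comap (LinearMap.inr g.S N (g.T N)))
    refine (Submodule.ne_bot_iff _).mpr ⟨g.mm x y • n, ?_, hxyn⟩
    have hxy := U.smul_mem (x : AS) hy
    rw [coe_smul_oddIncl_tmk] at hxy
    simpa [V] using hxy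
  rcases eq_bot_or_eq_top (V.comap (LinearMap.inl g.S N (g.T N))) with hl | hl
  · rcases eq_bot_or_eq_top (V.comap (LinearMap.inr g.S N (g.T N))) with hr | hr
    · exact absurd (Submodule.eq_bot_of_comap_inl_eq_bot_of_comap_inr_eq_bot hniso hl hr) hV
    · exact absurd hl (even_of_odd hr)
  · exact top_of_even hl

end Simplicity

end GradedPair

universe u

/-- let `AS = S ⊕ S⁻` be a `ℤ/2ℤ`-graded algebra and `M` a simple `S`-module
such that `DM = S⁻ ⊗_S M` is simple, `DM` is not isomorphic to `M`, and `η_M : D²M → M`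
(determined by `x ⊗ (y ⊗ m) ↦ (xy)·m`) is nonzero.  Then the induced `AS`-module
`AS ⊗_S M` is simple, and it is, up to isomorphism, the unique simple `AS`-module whose
restriction to `S` contains `M` as a submodule. -/
theorem stmt_15 {AS : Type u} [Ring AS] (g : GradedPair AS)
    (hcompl : ∀ a : AS, ∃! p : g.S × g.Sm, a = (p.1 : AS) + (p.2 : AS))
    (M : Type u) [AddCommGroup M] [Module g.S M]
    (hM : IsSimpleModule g.S M) (hDM : IsSimpleModule g.S (g.T M))
    (hniso : IsEmpty (g.T M ≃ₗ[g.S] M))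
    (hη : ∃ (x y : g.Sm) (m : M), g.mm x y • m ≠ 0) :
    IsSimpleModule AS (g.TA M) ∧
    ∀ (P : Type u) [AddCommGroup P] [Module AS P], IsSimpleModule AS P →
      (∃ f : M →ₗ[g.S] P, Function.Injective f) →
      Nonempty (g.TA M ≃ₗ[AS] P) := by
  have : Nontrivial M := IsSimpleModule.nontrivial g.S M
  have hTA := g.isSimpleModule_TA hcompl hniso hη
  refine ⟨hTA, fun P _ _ hP ⟨f, hf⟩ => ?_⟩
  have hG : g.inducedLift f ≠ 0 := fun h => LinearMap.ne_zero_of_injective hf <|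
    LinearMap.ext fun n => by simpa [h] using (g.inducedLift_evenIncl f n).symm
  exact ⟨LinearEquiv.ofBijective _ (LinearMap.bijective_of_ne_zero hG)⟩
end

section
/- For a field F of characteristic 0 or greater than d and n ≥ d, the multiplication map φ: S_F^-(n,d) ⊗_{S_F(n,d)} S_F^-(n,d) → S_F(n,d) is an isomorphism of (S_F(n,d), S_F(n,d))-bimodules; consequently the Koszul duality functor D(M) = S_F^-(n,d) ⊗_{S_F(n,d)} M is an equivalence of the category of S_F(n,d)-modules with itself. -/
namespace GradedPair

variable {AS : Type*} [Ring AS] (g : GradedPair AS)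

@[simp] lemma coe_rmul (x : g.Sm) (s : g.S) : ((g.rmul x s : g.Sm) : AS) = x * s := rfl

@[simp] lemma coe_mm (x y : g.Sm) : ((g.mm x y : g.S) : AS) = x * y := rfl

lemma mm_smul_eq_rmul_mm (x y z : g.Sm) : g.mm x y • z = g.rmul x (g.mm y z) :=
  Subtype.ext (mul_assoc _ _ _)

section Tensor

variable {N : Type*} [AddCommGroup N] [Module g.S N]

lemma tmk_add_left (x x' : g.Sm) (m : N) : g.tmk (x + x') m = g.tmk x m + g.tmk x' m := by
  rw [tmk, tmk, tmk, ← Submodule.Quotient.mk_add, Submodule.Quotient.eq]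
  refine Submodule.subset_span (Or.inl (Or.inl (Or.inl ⟨x, x', m, ?_⟩)))
  abel

lemma tmk_add_right (x : g.Sm) (m m' : N) : g.tmk x (m + m') = g.tmk x m + g.tmk x m' := by
  rw [tmk, tmk, tmk, ← Submodule.Quotient.mk_add, Submodule.Quotient.eq]
  refine Submodule.subset_span (Or.inl (Or.inl (Or.inr ⟨x, m, m', ?_⟩)))
  abel

lemma tmk_rmul (x : g.Sm) (s : g.S) (m : N) : g.tmk (g.rmul x s) m = g.tmk x (s • m) := by
  rw [tmk, tmk, Submodule.Quotient.eq]
  exact Submodule.subset_span (Or.inl (Or.inr ⟨x, s, m, rfl⟩))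

lemma tmk_smul (s : g.S) (x : g.Sm) (m : N) : g.tmk (s • x) m = s • g.tmk x m := by
  rw [tmk, tmk, ← Submodule.Quotient.mk_smul, Submodule.Quotient.eq]
  exact Submodule.subset_span (Or.inr ⟨s, x, m, rfl⟩)

noncomputable def tmkLeft (m : N) : g.Sm →+ g.T N :=
  AddMonoidHom.mk' (g.tmk · m) (g.tmk_add_left · · m)

noncomputable def tmkRight (x : g.Sm) : N →+ g.T N :=
  AddMonoidHom.mk' (g.tmk x) (g.tmk_add_right x)

lemma tmk_sum_left {ι : Type*} (s : Finset ι) (x : ι → g.Sm) (m : N) :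
    g.tmk (∑ i ∈ s, x i) m = ∑ i ∈ s, g.tmk (x i) m :=
  map_sum (g.tmkLeft m) x s

lemma tmk_sum_right {ι : Type*} (s : Finset ι) (x : g.Sm) (m : ι → N) :
    g.tmk x (∑ i ∈ s, m i) = ∑ i ∈ s, g.tmk x (m i) :=
  map_sum (g.tmkRight x) m s

lemma closure_range_tmk :
    AddSubmonoid.closure (Set.range fun p : g.Sm × N => g.tmk p.1 p.2) = ⊤ := by
  refine (AddSubmonoid.eq_top_iff' _).2 fun z => ?_
  obtain ⟨f, rfl⟩ := Submodule.Quotient.mk_surjective _ z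
  induction f using Finsupp.induction with
  | zero => exact zero_mem _
  | single_add p s f _ _ ih =>
    rw [Submodule.Quotient.mk_add]
    refine add_mem (AddSubmonoid.subset_closure ⟨(s • p.1, p.2), ?_⟩) ih
    show g.tmk (s • p.1) p.2 = _
    rw [tmk_smul, tmk, ← Submodule.Quotient.mk_smul, Finsupp.smul_single, smul_eq_mul, mul_one]

lemma closure_range_tmk_tmk :
    AddSubmonoid.closure (Set.range fun p : g.Sm × g.Sm × N => g.tmk p.1 (g.tmk p.2.1 p.2.2)) =
      ⊤ := by
  set D := AddSubmonoid.closure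
    (Set.range fun p : g.Sm × g.Sm × N => g.tmk p.1 (g.tmk p.2.1 p.2.2))
  rw [eq_top_iff, ← g.closure_range_tmk, AddSubmonoid.closure_le]
  rintro _ ⟨⟨x, t⟩, rfl⟩
  have hx : D.comap (g.tmkRight x) = ⊤ := by
    rw [eq_top_iff, ← g.closure_range_tmk, AddSubmonoid.closure_le]
    rintro _ ⟨⟨y, m⟩, rfl⟩
    exact AddSubmonoid.subset_closure ⟨(x, y, m), rfl⟩
  exact (AddSubmonoid.mem_comap (f := g.tmkRight x)).1 (hx ▸ AddSubmonoid.mem_top t)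

lemma addMonoidHom_ext {M : Type*} [AddMonoid M] {f f' : g.T N →+ M}
    (h : ∀ x m, f (g.tmk x m) = f' (g.tmk x m)) : f = f' :=
  AddMonoidHom.eq_of_eqOn_denseM g.closure_range_tmk (by rintro _ ⟨⟨x, m⟩, rfl⟩; exact h x m)

lemma addMonoidHom_ext₂ {M : Type*} [AddMonoid M] {f f' : g.T (g.T N) →+ M}
    (h : ∀ x y m, f (g.tmk x (g.tmk y m)) = f' (g.tmk x (g.tmk y m))) : f = f' :=
  AddMonoidHom.eq_of_eqOn_denseM g.closure_range_tmk_tmk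
    (by rintro _ ⟨⟨x, y, m⟩, rfl⟩; exact h x y m)

end Tensor

section SumMulEqOne

variable {ι : Type*} [Fintype ι] {x y : ι → g.Sm}

lemma sum_mm_eq_one (hxy : ∑ i, (x i : AS) * y i = 1) : ∑ i, g.mm (x i) (y i) = 1 :=
  Subtype.ext (by simpa using hxy)

lemma sum_rmul_mm (hxy : ∑ i, (x i : AS) * y i = 1) (a : g.Sm) :
    ∑ i, g.rmul (x i) (g.mm (y i) a) = a :=
  Subtype.ext (by simp [← mul_assoc, ← Finset.sum_mul, hxy])

lemma sum_mm_smul (hxy : ∑ i, (x i : AS) * y i = 1) (b : g.Sm) :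
    ∑ i, g.mm b (x i) • y i = b :=
  Subtype.ext (by simp [mul_assoc, ← Finset.mul_sum, hxy])

variable {N : Type*} [AddCommGroup N] [Module g.S N]

lemma sum_tmk_mm_smul (hxy : ∑ i, (x i : AS) * y i = 1) (a : g.Sm) (t : N) :
    ∑ i, g.tmk (x i) (g.mm (y i) a • t) = g.tmk a t := by
  conv_rhs => rw [← g.sum_rmul_mm hxy a]
  simp only [tmk_sum_left, tmk_rmul]

lemma mm_smul_sum_tmk (hxy : ∑ i, (x i : AS) * y i = 1) (a b : g.Sm) :
    g.mm a b • ∑ i, g.tmk (x i) (y i) = g.tmk a b := by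
  simp_rw [Finset.smul_sum, ← tmk_smul, mm_smul_eq_rmul_mm, tmk_rmul]
  rw [← tmk_sum_right, g.sum_mm_smul hxy]

theorem bijective_of_tmk_eq_mm (hxy : ∑ i, (x i : AS) * y i = 1)
    (φ : g.T g.Sm →ₗ[g.S] g.S) (hφ : ∀ a b, φ (g.tmk a b) = g.mm a b) :
    Function.Bijective φ := by
  set e := ∑ i, g.tmk (x i) (y i)
  have hinv : (LinearMap.toSpanSingleton g.S (g.T g.Sm) e ∘ₗ φ).toAddMonoidHom = .id _ :=
    g.addMonoidHom_ext fun a b => by simp [hφ, g.mm_smul_sum_tmk hxy, e]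
  refine Function.bijective_iff_has_inverse.2 ⟨(· • e), fun z => DFunLike.congr_fun hinv z,
    fun s => ?_⟩
  simp only [e, map_smul, map_sum, hφ, g.sum_mm_eq_one hxy, smul_eq_mul, mul_one]

theorem bijective_of_tmk_tmk_eq_mm_smul (hxy : ∑ i, (x i : AS) * y i = 1)
    (η : g.T (g.T N) →ₗ[g.S] N) (hη : ∀ a b m, η (g.tmk a (g.tmk b m)) = g.mm a b • m) :
    Function.Bijective η := by
  let ζ : N →+ g.T (g.T N) := ∑ i, (g.tmkRight (x i)).comp (g.tmkRight (y i))
  have hζ (m : N) : ζ m = ∑ i, g.tmk (x i) (g.tmk (y i) m) := by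
    simp [ζ, tmkRight]
  have hζη : ζ.comp η.toAddMonoidHom = AddMonoidHom.id _ :=
    g.addMonoidHom_ext₂ fun a b m => by
      simp_rw [AddMonoidHom.comp_apply, LinearMap.toAddMonoidHom_coe, hη, hζ, ← tmk_rmul,
        ← mm_smul_eq_rmul_mm, tmk_smul, AddMonoidHom.id_apply]
      exact g.sum_tmk_mm_smul hxy a _
  refine Function.bijective_iff_has_inverse.2 ⟨ζ, fun z => DFunLike.congr_fun hζη z, fun m => ?_⟩
  simp only [hζ, map_sum, hη, ← Finset.sum_smul, g.sum_mm_eq_one hxy, one_smul]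

end SumMulEqOne

end GradedPair


noncomputable section

open Equiv

variable (F : Type*) [Field F] (n d : ℕ)

/-- The tensor space `(Fⁿ)^{⊗d}`, realized as `F[I(n,d)]` with `I(n,d) = Fin d → Fin n`. -/
abbrev TensorSpace := (Fin d → Fin n) → F

/-- `S_d`-equivariance of an endomorphism of tensor space. -/
def SCond (T : Module.End F (TensorSpace F n d)) : Prop :=
  ∀ (w : Equiv.Perm (Fin d)) (f : TensorSpace F n d) (v : Fin d → Fin n),
    T (fun u => f (u ∘ w)) v = T f (v ∘ w)

/-- Sign-twisted `S_d`-equivariance of an endomorphism of tensor space. -/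
def MCond (T : Module.End F (TensorSpace F n d)) : Prop :=
  ∀ (w : Equiv.Perm (Fin d)) (f : TensorSpace F n d) (v : Fin d → Fin n),
    T (fun u => f (u ∘ w)) v = ((Equiv.Perm.sign w : ℤ) : F) * T f (v ∘ w)

/-- The Schur algebra `S_F(n,d)` as a subring of `End((Fⁿ)^{⊗d})`. -/
def schurSubring : Subring (Module.End F (TensorSpace F n d)) where
  carrier := {T | SCond F n d T}
  one_mem' := by intro w f v; rfl
  mul_mem' := by
    intro a b ha hb w f v
    rw [Module.End.mul_apply, Module.End.mul_apply]
    have h1 : b (fun u => f (u ∘ w)) = fun u => b f (u ∘ w) := funext (hb w f)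
    rw [h1]
    exact ha w (b f) v
  add_mem' := by
    intro a b ha hb w f v
    simp only [LinearMap.add_apply, Pi.add_apply, ha w f v, hb w f v]
  zero_mem' := by intro w f v; simp
  neg_mem' := by
    intro a ha w f v
    simp only [LinearMap.neg_apply, Pi.neg_apply, ha w f v]

/-- The bimodule `S_F⁻(n,d)` as an additive subgroup of `End((Fⁿ)^{⊗d})`. -/
def schurMinusSubgroup : AddSubgroup (Module.End F (TensorSpace F n d)) where
  carrier := {T | MCond F n d T}
  add_mem' := by
    intro a b ha hb w f v
    simp only [LinearMap.add_apply, Pi.add_apply, ha w f v, hb w f v]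
    ring
  zero_mem' := by intro w f v; simp
  neg_mem' := by
    intro a ha w f v
    simp only [LinearMap.neg_apply, Pi.neg_apply, ha w f v]
    ring

lemma sign_sq (w : Equiv.Perm (Fin d)) :
    ((Equiv.Perm.sign w : ℤ) : F) * ((Equiv.Perm.sign w : ℤ) : F) = 1 := by
  rcases Int.units_eq_one_or (Equiv.Perm.sign w) with h | h <;> simp [h]

/-- The `ℤ/2ℤ`-grading `AS_F(n,d) = S_F(n,d) ⊕ S_F⁻(n,d)` of the alternating Schur algebra
inside `End((Fⁿ)^{⊗d})`. -/
def schurGradedPair : GradedPair (Module.End F (TensorSpace F n d)) where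
  S := schurSubring F n d
  Sm := schurMinusSubgroup F n d
  smul_mem := by
    intro s hs x hx w f v
    rw [Module.End.mul_apply, Module.End.mul_apply]
    have h1 : x (fun u => f (u ∘ w)) =
        ((Equiv.Perm.sign w : ℤ) : F) • fun u => x f (u ∘ w) := by
      funext u
      simpa using hx w f u
    rw [h1, map_smul]
    simp only [Pi.smul_apply, smul_eq_mul]
    rw [hs w (x f) v]
  mul_smem := by
    intro x hx s hs w f v
    rw [Module.End.mul_apply, Module.End.mul_apply]
    have h1 : s (fun u => f (u ∘ w)) = fun u => s f (u ∘ w) := funext (hs w f)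
    rw [h1]
    exact hx w (s f) v
  mm_mem := by
    intro x hx y hy w f v
    rw [Module.End.mul_apply, Module.End.mul_apply]
    have h1 : y (fun u => f (u ∘ w)) =
        ((Equiv.Perm.sign w : ℤ) : F) • fun u => y f (u ∘ w) := by
      funext u
      simpa using hy w f u
    rw [h1, map_smul]
    simp only [Pi.smul_apply, smul_eq_mul]
    rw [hx w (y f) v, ← mul_assoc, sign_sq, one_mul]

section SignedOrbitMap

variable {n d}

def signedOrbitMap (v₀ z₀ : Fin d → Fin n) : Module.End F (TensorSpace F n d) :=
  ∑ σ : Perm (Fin d), ((Perm.sign σ : ℤ) : F) •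
    (LinearMap.single F (fun _ => F) (v₀ ∘ σ) ∘ₗ LinearMap.proj (z₀ ∘ σ))

lemma signedOrbitMap_apply (v₀ z₀ : Fin d → Fin n) (f : TensorSpace F n d) (v : Fin d → Fin n) :
    signedOrbitMap F v₀ z₀ f v =
      ∑ σ : Perm (Fin d), if v = v₀ ∘ σ then ((Perm.sign σ : ℤ) : F) * f (z₀ ∘ σ) else 0 := by
  simp [signedOrbitMap, Pi.single_apply]

lemma smul_mem_schurMinusSubgroup (c : F) {T : Module.End F (TensorSpace F n d)}
    (hT : T ∈ schurMinusSubgroup F n d) : c • T ∈ schurMinusSubgroup F n d := by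
  intro w f v
  simp only [LinearMap.smul_apply, Pi.smul_apply, smul_eq_mul, hT w f v]
  ring

lemma signedOrbitMap_mem (v₀ z₀ : Fin d → Fin n) :
    signedOrbitMap F v₀ z₀ ∈ schurMinusSubgroup F n d := by
  intro w f v
  simp only [signedOrbitMap_apply, Finset.mul_sum]
  refine Fintype.sum_equiv (Equiv.mulRight w) _ _ fun σ => ?_
  have hv : v ∘ w = v₀ ∘ ⇑(σ * w) ↔ v = v₀ ∘ σ := by
    rw [Perm.coe_mul, ← Function.comp_assoc]
    exact w.surjective.injective_comp_right.eq_iff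
  simp only [coe_mulRight, hv]
  simp only [Perm.sign_mul, Units.val_mul, Int.cast_mul, Perm.coe_mul, Function.comp_assoc]
  split_ifs
  · linear_combination (-(((Perm.sign σ : ℤ) : F) * f (z₀ ∘ σ ∘ w))) * sign_sq F d w
  · rw [mul_zero]

lemma signedOrbitMap_mul_apply (v₀ : Fin d → Fin n) {z₀ : Fin d → Fin n}
    (hz₀ : Function.Injective z₀) (f : TensorSpace F n d) (v : Fin d → Fin n) :
    (signedOrbitMap F v₀ z₀ * signedOrbitMap F z₀ v₀) f v =
      ∑ σ : Perm (Fin d), if v = v₀ ∘ σ then f v else 0 := by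
  have hz₀σ (σ τ : Perm (Fin d)) : z₀ ∘ σ = z₀ ∘ τ ↔ τ = σ := by
    rw [hz₀.comp_left.eq_iff, DFunLike.coe_fn_eq, eq_comm]
  rw [Module.End.mul_apply, signedOrbitMap_apply]
  refine Finset.sum_congr rfl fun σ _ => ?_
  split_ifs with hv
  · rw [signedOrbitMap_apply]
    simp only [hz₀σ, Finset.sum_ite_eq', Finset.mem_univ, if_true]
    rw [← mul_assoc, sign_sq, one_mul, hv]
  · rfl

lemma sum_signedOrbitMap_mul {z₀ : Fin d → Fin n} (hz₀ : Function.Injective z₀) :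
    ∑ v₀, signedOrbitMap F v₀ z₀ * signedOrbitMap F z₀ v₀ = (d.factorial : F) • 1 := by
  refine LinearMap.ext fun f => funext fun v => ?_
  simp only [LinearMap.sum_apply, Finset.sum_apply, signedOrbitMap_mul_apply F _ hz₀]
  rw [Finset.sum_comm]
  simp only [← Equiv.comp_symm_eq, Finset.sum_ite_eq, Finset.mem_univ, if_true,
    Finset.sum_const, Finset.card_univ, Fintype.card_perm, Fintype.card_fin]
  simp [nsmul_eq_mul]

end SignedOrbitMap

lemma natCast_factorial_ne_zero (hchar : ringChar F = 0 ∨ d < ringChar F) :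
    (d.factorial : F) ≠ 0 := by
  rw [Ne, ringChar.spec]
  rcases hchar with h | h
  · rw [h, zero_dvd_iff]
    exact d.factorial_ne_zero
  · have hp : (ringChar F).Prime :=
      (CharP.char_is_prime_or_zero F (ringChar F)).resolve_right (by omega)
    rw [hp.dvd_factorial]
    omega

lemma exists_sum_mul_eq_one (hchar : ringChar F = 0 ∨ d < ringChar F) (hnd : d ≤ n) :
    ∃ x y : (Fin d → Fin n) → schurMinusSubgroup F n d,
      ∑ i, (x i : Module.End F (TensorSpace F n d)) * y i = 1 := by
  refine ⟨fun v₀ => ⟨(d.factorial : F)⁻¹ • signedOrbitMap F v₀ (Fin.castLE hnd),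
      smul_mem_schurMinusSubgroup F _ (signedOrbitMap_mem F _ _)⟩,
    fun v₀ => ⟨signedOrbitMap F (Fin.castLE hnd) v₀, signedOrbitMap_mem F _ _⟩, ?_⟩
  simp only [smul_mul_assoc, ← Finset.smul_sum,
    sum_signedOrbitMap_mul F (Fin.castLE_injective hnd), smul_smul, inv_mul_cancel₀ (natCast_factorial_ne_zero F d hchar), one_smul]

universe v

/-- for a field `F` of characteristic `0` or greater than `d`, and `n ≥ d`,
the multiplication map `φ : S_F⁻(n,d) ⊗_{S_F(n,d)} S_F⁻(n,d) → S_F(n,d)` is an isomorphism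
of bimodules (the `S`-linear map determined by `x ⊗ y ↦ xy` is bijective); consequently the
Koszul duality functor `D(M) = S_F⁻(n,d) ⊗_{S_F(n,d)} M` is an equivalence of the category
of `S_F(n,d)`-modules with itself (the natural transformation `η : D² → id`, determined by
`x ⊗ (y ⊗ m) ↦ (xy)·m`, is a natural isomorphism, so `D` is quasi-inverse to itself). -/
theorem stmt_17 (hchar : ringChar F = 0 ∨ d < ringChar F) (hnd : d ≤ n) :
    (∀ φ : (schurGradedPair F n d).T (schurGradedPair F n d).Sm →ₗ[(schurGradedPair F n d).S]
        (schurGradedPair F n d).S,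
      (∀ x y, φ ((schurGradedPair F n d).tmk x y) = (schurGradedPair F n d).mm x y) →
      Function.Bijective φ) ∧
    (∀ (N : Type v) [AddCommGroup N] [Module (schurGradedPair F n d).S N]
      (η : (schurGradedPair F n d).T ((schurGradedPair F n d).T N) →ₗ[(schurGradedPair F n d).S] N),
      (∀ x y (m : N), η ((schurGradedPair F n d).tmk x ((schurGradedPair F n d).tmk y m)) =
        (schurGradedPair F n d).mm x y • m) →
      Function.Bijective η) := by
  obtain ⟨x, y, hxy⟩ := exists_sum_mul_eq_one F n d hchar hnd
  exact ⟨fun φ hφ => (schurGradedPair F n d).bijective_of_tmk_eq_mm hxy φ hφ,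
    fun N _ _ η hη => (schurGradedPair F n d).bijective_of_tmk_tmk_eq_mm_smul hxy η hη⟩

end
end
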